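/- arXiv:2103.10309 — 7 statements merged into one kernel-verified Lean document; each statement's English description precedes it below -/
import Mathlib

section
/- For any matrix A and any vector v in the row space of A with Av ≠ 0, one has ‖v‖² / (‖A‖_F² ‖A⁻¹‖²) ≤ Σ_{i=1}^m ⟨A_{i*}/‖A_{i*}‖, v⟩² · ‖A_{i*}‖²/‖A‖_F², i.e. the expected squared inner product of v with a row of A sampled with probability ‖A_{i*}‖²/‖A‖_F², normalized, is at least κ_F^{-2}‖v‖². -/
/-- For a nonzero matrix `A` and a vector `v` in the row space of `A`
with `A v ≠ 0`, one has
`‖v‖² / (‖A‖_F² ‖A⁻¹‖²) ≤ ∑ i, ⟨A_{i*}/‖A_{i*}‖, v⟩² ‖A_{i*}‖² / ‖A‖_F²`.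
The quantity `cinv` stands for `‖A⁻¹‖` (the norm of the Moore–Penrose pseudoinverse),
characterized by its defining property `‖w‖ ≤ cinv ‖A w‖` for all `w` in the row space. -/
theorem stmt0 (m n : ℕ) (A : Matrix (Fin m) (Fin n) ℝ) (hA : A ≠ 0)
    (cinv : ℝ) (hcinv0 : 0 < cinv)
    (hcinv : ∀ w : Fin n → ℝ, (∃ y : Fin m → ℝ, w = Matrix.vecMul y A) →
      (∑ j, w j ^ 2) ≤ cinv ^ 2 * ∑ i, (A.mulVec w i) ^ 2)
    (v : Fin n → ℝ) (hv : ∃ y : Fin m → ℝ, v = Matrix.vecMul y A)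
    (hAv : A.mulVec v ≠ 0) :
    (∑ j, v j ^ 2) / ((∑ i, ∑ j, A i j ^ 2) * cinv ^ 2) ≤
      ∑ i, ((∑ j, A i j / Real.sqrt (∑ l, A i l ^ 2) * v j) ^ 2) *
        ((∑ j, A i j ^ 2) / (∑ i', ∑ j, A i' j ^ 2)) := by
  set F := ∑ i, ∑ j, A i j ^ 2 with hF
  have hFnn : 0 ≤ F := Finset.sum_nonneg fun i _ => Finset.sum_nonneg fun j _ => sq_nonneg _
  have hF0 : 0 < F := by
    rcases hFnn.lt_or_eq with h | h
    · exact h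
    · exfalso; apply hA
      have h' : ∀ i ∈ Finset.univ, (∑ j, A i j ^ 2 : ℝ) = 0 :=
        (Finset.sum_eq_zero_iff_of_nonneg
          (fun i _ => Finset.sum_nonneg fun j _ => sq_nonneg _)).mp h.symm
      ext i j
      have h'' := (Finset.sum_eq_zero_iff_of_nonneg (fun j _ => sq_nonneg (A i j))).mp
        (h' i (Finset.mem_univ i)) j (Finset.mem_univ j)
      simpa using pow_eq_zero_iff (two_ne_zero) |>.mp h''
  have key : ∀ i, ((∑ j, A i j / Real.sqrt (∑ l, A i l ^ 2) * v j) ^ 2) *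
        ((∑ j, A i j ^ 2) / F) = (A.mulVec v i) ^ 2 / F := by
    intro i
    have hrnn : (0:ℝ) ≤ ∑ l, A i l ^ 2 := Finset.sum_nonneg fun l _ => sq_nonneg _
    rcases hrnn.lt_or_eq with hpos | h0
    · have hrs : Real.sqrt (∑ l, A i l ^ 2) ≠ 0 := by positivity
      have h1 : (∑ j, A i j / Real.sqrt (∑ l, A i l ^ 2) * v j)
          = (∑ j, A i j * v j) / Real.sqrt (∑ l, A i l ^ 2) := by
        rw [Finset.sum_div]; exact Finset.sum_congr rfl fun j _ => by ring
      have h2 : A.mulVec v i = ∑ j, A i j * v j := rfl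
      rw [h1, h2, div_pow, Real.sq_sqrt hrnn]
      field_simp
    · have hz : ∀ j, A i j = 0 := by
        intro j
        have := (Finset.sum_eq_zero_iff_of_nonneg (fun l _ => sq_nonneg (A i l))).mp
          h0.symm j (Finset.mem_univ j)
        simpa using pow_eq_zero_iff (two_ne_zero) |>.mp this
      simp [Matrix.mulVec, dotProduct, hz]
  rw [Finset.sum_congr rfl (fun i _ => key i), ← Finset.sum_div]
  have h1 := hcinv v hv
  calc (∑ j, v j ^ 2) / (F * cinv ^ 2)
      ≤ (cinv ^ 2 * ∑ i, (A.mulVec v i) ^ 2) / (F * cinv ^ 2) := by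
        apply div_le_div_of_nonneg_right h1 (by positivity) |>.trans_eq rfl
    _ = (∑ i, (A.mulVec v i) ^ 2) / F := by
        field_simp
end

section
/- Let x_{k+1} = x_k + ((b_{r} − ⟨A_{r*}, x_k⟩)/‖A_{r*}‖²) A_{r*} be one step of the randomized Kaczmarz iteration where the row index r is sampled with probability ‖A_{r*}‖²/‖A‖_F². If x_* satisfies A x_* = b and x_k − x_* lies in the row space of A, then E[‖x_{k+1} − x_*‖²] ≤ (1 − κ_F^{-2}) ‖x_k − x_*‖². -/
/-- One step of the randomized Kaczmarz iteration
`x' i = x + ((b i − ⟨A_{i*}, x⟩)/‖A_{i*}‖²) A_{i*}`, with the row index sampled with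
probability `‖A_{i*}‖²/‖A‖_F²`, contracts the expected squared error:
`E[‖x' − x_*‖²] ≤ (1 − κ_F⁻²) ‖x − x_*‖²`, where `κ_F² = ‖A‖_F² ‖A⁻¹‖²`.
Here `cinv` stands for `‖A⁻¹‖`, characterized by `‖w‖ ≤ cinv ‖A w‖` on the row space. -/
theorem stmt1 (m n : ℕ) (A : Matrix (Fin m) (Fin n) ℝ) (hA : A ≠ 0)
    (cinv : ℝ) (hcinv0 : 0 < cinv)
    (hcinv : ∀ w : Fin n → ℝ, (∃ y : Fin m → ℝ, w = Matrix.vecMul y A) →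
      (∑ j, w j ^ 2) ≤ cinv ^ 2 * ∑ i, (A.mulVec w i) ^ 2)
    (b : Fin m → ℝ) (xstar x : Fin n → ℝ)
    (hb : A.mulVec xstar = b)
    (hx : ∃ y : Fin m → ℝ, (fun j => x j - xstar j) = Matrix.vecMul y A) :
    ∑ i, ((∑ j, A i j ^ 2) / (∑ i', ∑ j, A i' j ^ 2)) *
        (∑ j, (x j + (b i - ∑ l, A i l * x l) / (∑ l, A i l ^ 2) * A i j - xstar j) ^ 2)
      ≤ (1 - 1 / ((∑ i', ∑ j, A i' j ^ 2) * cinv ^ 2)) * ∑ j, (x j - xstar j) ^ 2 := by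
  classical
  set F : ℝ := ∑ i' : Fin m, ∑ j, A i' j ^ 2 with hFdef
  set e : Fin n → ℝ := fun j => x j - xstar j with he
  set E2 : ℝ := ∑ j, e j ^ 2 with hE2def
  have hb' : ∀ i, b i = ∑ l, A i l * xstar l := by
    intro i; rw [← hb]; simp [Matrix.mulVec, dotProduct]
  have hne : ∃ i j, A i j ≠ 0 := by
    by_contra h; push_neg at h; exact hA (by ext i j; exact h i j)
  obtain ⟨i0, j0, h0⟩ := hne
  have hF : 0 < F := by
    have h1 : A i0 j0 ^ 2 ≤ ∑ j, A i0 j ^ 2 :=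
      Finset.single_le_sum (f := fun j => A i0 j ^ 2) (fun j _ => sq_nonneg _)
        (Finset.mem_univ _)
    have h2 : (∑ j, A i0 j ^ 2) ≤ F :=
      Finset.single_le_sum (f := fun i => ∑ j, A i j ^ 2)
        (fun i _ => Finset.sum_nonneg fun j _ => sq_nonneg _) (Finset.mem_univ _)
    have h3 : 0 < A i0 j0 ^ 2 := by positivity
    linarith
  set N : Fin m → ℝ := fun i => ∑ l, A i l ^ 2 with hNdef
  set r : Fin m → ℝ := fun i => b i - ∑ l, A i l * x l with hrdef
  have hD : ∀ i, (∑ j, A i j * e j) = -(r i) := by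
    intro i
    simp only [hrdef, hb' i, he, mul_sub]
    rw [Finset.sum_sub_distrib]
    ring
  -- key per-row identity
  have key : ∀ i : Fin m,
      (N i / F) * (∑ j, (x j + r i / N i * A i j - xstar j) ^ 2)
        = (N i / F) * E2 - (r i) ^ 2 / F := by
    intro i
    have hterm : ∀ j, x j + r i / N i * A i j - xstar j = e j + (r i / N i) * A i j := by
      intro j; simp [he]; ring
    have expand : (∑ j, (x j + r i / N i * A i j - xstar j) ^ 2)
        = E2 + (2 * (r i / N i)) * (∑ j, A i j * e j) + (r i / N i) ^ 2 * N i := by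
      have h1 : ∀ j, (x j + r i / N i * A i j - xstar j) ^ 2
          = e j ^ 2 + (2 * (r i / N i)) * (A i j * e j) + (r i / N i) ^ 2 * A i j ^ 2 :=
        fun j => by rw [hterm j]; ring
      rw [Finset.sum_congr rfl fun j _ => h1 j, Finset.sum_add_distrib,
        Finset.sum_add_distrib, ← Finset.mul_sum, ← Finset.mul_sum]
    rw [expand, hD i]
    by_cases hNi : N i = 0
    · have hrow : ∀ l, A i l = 0 := by
        intro l
        have := (Finset.sum_eq_zero_iff_of_nonneg
          (fun l _ => sq_nonneg (A i l))).mp hNi l (Finset.mem_univ l)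
        exact pow_eq_zero_iff (n := 2) (by norm_num) |>.mp this
      have hri : r i = 0 := by
        simp [hrdef, hb' i, hrow]
      simp [hNi, hri]
    · field_simp
      ring
  calc ∑ i, ((∑ j, A i j ^ 2) / F) *
        (∑ j, (x j + (b i - ∑ l, A i l * x l) / (∑ l, A i l ^ 2) * A i j - xstar j) ^ 2)
      = ∑ i, ((N i / F) * E2 - (r i) ^ 2 / F) :=
        Finset.sum_congr rfl fun i _ => key i
    _ = E2 - (∑ i, (r i) ^ 2) / F := by
        rw [Finset.sum_sub_distrib, ← Finset.sum_div, ← Finset.sum_mul, ← Finset.sum_div,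
          ← hFdef, div_self hF.ne', one_mul]
    _ ≤ (1 - 1 / (F * cinv ^ 2)) * E2 := by
        have hE : E2 ≤ cinv ^ 2 * ∑ i, (A.mulVec e i) ^ 2 := hcinv e hx
        have hmv : ∀ i, (A.mulVec e i) ^ 2 = (r i) ^ 2 := by
          intro i
          have : A.mulVec e i = -(r i) := by
            rw [← hD i]; simp [Matrix.mulVec, dotProduct]
          rw [this]; ring
        have hE' : E2 ≤ cinv ^ 2 * ∑ i, (r i) ^ 2 := by
          rw [← Finset.sum_congr rfl fun i _ => hmv i]; exact hE
        have hdiv : E2 / (F * cinv ^ 2) ≤ (∑ i, (r i) ^ 2) / F := by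
          rw [div_le_div_iff₀ (by positivity) hF]
          nlinarith [hE', hF]
        have : (1 - 1 / (F * cinv ^ 2)) * E2 = E2 - E2 / (F * cinv ^ 2) := by
          field_simp
        rw [this]
        linarith
end

section
/- Under the randomized Kaczmarz iteration with row i sampled with probability ‖A_{i*}‖²/‖A‖_F², starting from any x_0 with x_0 − x_* in the row space of A where A x_* = b, after T steps one has E[‖x_T − x_*‖²] ≤ (1 − κ_F^{-2})^T ‖x_0 − x_*‖². -/
open Finset


section RKacz
variable {m n : ℕ} (A : Matrix (Fin m) (Fin n) ℝ)

lemma rk_S_pos (hA : A ≠ 0) : (0:ℝ) < ∑ i', ∑ j, A i' j ^ 2 := by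
  obtain ⟨i, j, hij⟩ : ∃ i j, A i j ≠ 0 := by
    by_contra h; push_neg at h
    exact hA (by ext i j; exact h i j)
  have h1 : (0:ℝ) < ∑ j, A i j ^ 2 :=
    Finset.sum_pos' (fun j _ => sq_nonneg _)
      ⟨j, Finset.mem_univ _, lt_of_le_of_ne (sq_nonneg _) (Ne.symm (pow_ne_zero 2 hij))⟩
  exact Finset.sum_pos' (fun i _ => Finset.sum_nonneg fun j _ => sq_nonneg _)
    ⟨i, Finset.mem_univ _, h1⟩

lemma rk_res (b : Fin m → ℝ) (xstar : Fin n → ℝ) (hb : A.mulVec xstar = b) (xc : Fin n → ℝ) (i : Fin m) :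
    b i - ∑ l, A i l * xc l = -(∑ l, A i l * (xc l - xstar l)) := by
  have hbi : b i = ∑ l, A i l * xstar l := by
    rw [← hb]; rfl
  rw [hbi]
  rw [show ∑ l, A i l * (xc l - xstar l)
      = (∑ l, A i l * xc l) - ∑ l, A i l * xstar l by
    rw [← Finset.sum_sub_distrib]; exact Finset.sum_congr rfl fun l _ => by ring]
  ring

lemma rk_cap (hA : A ≠ 0) (cinv : ℝ)
    (hcinv : ∀ w : Fin n → ℝ, (∃ y : Fin m → ℝ, w = Matrix.vecMul y A) →
      (∑ j, w j ^ 2) ≤ cinv ^ 2 * ∑ i, (A.mulVec w i) ^ 2) :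
    1 ≤ (∑ i', ∑ j, A i' j ^ 2) * cinv ^ 2 := by
  obtain ⟨i, j, hij⟩ : ∃ i j, A i j ≠ 0 := by
    by_contra h; push_neg at h
    exact hA (by ext i j; exact h i j)
  set S := ∑ i', ∑ j, A i' j ^ 2 with hS
  have hsi : (0:ℝ) < ∑ j, A i j ^ 2 :=
    Finset.sum_pos' (fun j _ => sq_nonneg _)
      ⟨j, Finset.mem_univ _, lt_of_le_of_ne (sq_nonneg _) (Ne.symm (pow_ne_zero 2 hij))⟩
  have hmem : ∃ y : Fin m → ℝ, (fun j => A i j) = Matrix.vecMul y A := by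
    refine ⟨Pi.single i 1, ?_⟩
    funext j'
    simp [Matrix.vecMul, dotProduct, Pi.single_apply, ite_mul]
  have h1 := hcinv (fun j => A i j) hmem
  have hcs : ∀ i' : Fin m, (A.mulVec (fun j => A i j) i') ^ 2
      ≤ (∑ j, A i' j ^ 2) * (∑ j, A i j ^ 2) := by
    intro i'
    have : A.mulVec (fun j => A i j) i' = ∑ j, A i' j * A i j := rfl
    rw [this]
    exact Finset.sum_mul_sq_le_sq_mul_sq Finset.univ (fun j => A i' j) (fun j => A i j)
  have h2 : ∑ i'', (A.mulVec (fun j => A i j) i'') ^ 2 ≤ S * (∑ j, A i j ^ 2) := by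
    rw [hS, Finset.sum_mul]
    exact Finset.sum_le_sum fun i' _ => hcs i'
  have h3 : (∑ j, A i j ^ 2) ≤ cinv ^ 2 * (S * (∑ j, A i j ^ 2)) := by
    calc (∑ j, A i j ^ 2) ≤ cinv ^ 2 * ∑ i'', (A.mulVec (fun j => A i j) i'') ^ 2 := h1
    _ ≤ cinv ^ 2 * (S * (∑ j, A i j ^ 2)) := by
        apply mul_le_mul_of_nonneg_left h2 (sq_nonneg _)
  nlinarith [hsi]

end RKacz


section RKacz2
variable {m n : ℕ} (A : Matrix (Fin m) (Fin n) ℝ)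

-- per-row identity
lemma rk_key (w : Fin n → ℝ) (i : Fin m) :
    ∑ j, (w j + (-(∑ l, A i l * w l)) / (∑ l, A i l ^ 2) * A i j) ^ 2
      = (∑ j, w j ^ 2) - (∑ l, A i l * w l) ^ 2 / (∑ l, A i l ^ 2) := by
  set c := ∑ l, A i l * w l with hc
  set s := ∑ l, A i l ^ 2 with hs
  by_cases h0 : s = 0
  · have hrow : ∀ j, A i j = 0 := by
      intro j
      have := (Finset.sum_eq_zero_iff_of_nonneg (fun j _ => sq_nonneg (A i j))).mp h0 j
        (Finset.mem_univ j)
      exact pow_eq_zero_iff (by norm_num) |>.mp this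
    have hc0 : c = 0 := by
      rw [hc]; exact Finset.sum_eq_zero fun l _ => by rw [hrow l]; ring
    simp [h0, hc0]
  · have expand : ∀ j, (w j + (-c) / s * A i j) ^ 2
        = w j ^ 2 - 2 * (c / s) * (A i j * w j) + (c / s) ^ 2 * A i j ^ 2 := by
      intro j; ring
    rw [Finset.sum_congr rfl fun j _ => expand j]
    rw [Finset.sum_add_distrib, Finset.sum_sub_distrib, ← Finset.mul_sum, ← Finset.mul_sum,
      ← hc, ← hs]
    field_simp
    ring

end RKacz2

section RKacz3
variable {m n : ℕ} (A : Matrix (Fin m) (Fin n) ℝ)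

lemma rk_res' (b : Fin m → ℝ) (xstar : Fin n → ℝ) (hb : A.mulVec xstar = b)
    (xc : Fin n → ℝ) (i : Fin m) :
    b i - ∑ l, A i l * xc l = -(∑ l, A i l * (xc l - xstar l)) := by
  have hbi : b i = ∑ l, A i l * xstar l := by rw [← hb]; rfl
  rw [hbi, show ∑ l, A i l * (xc l - xstar l)
      = (∑ l, A i l * xc l) - ∑ l, A i l * xstar l by
    rw [← Finset.sum_sub_distrib]; exact Finset.sum_congr rfl fun l _ => by ring]
  ring

lemma rk_stepA (hA : A ≠ 0) (cinv : ℝ) (hcinv0 : 0 < cinv)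
    (hcinv : ∀ w : Fin n → ℝ, (∃ y : Fin m → ℝ, w = Matrix.vecMul y A) →
      (∑ j, w j ^ 2) ≤ cinv ^ 2 * ∑ i, (A.mulVec w i) ^ 2)
    (b : Fin m → ℝ) (xstar : Fin n → ℝ) (hb : A.mulVec xstar = b) (xc : Fin n → ℝ)
    (hx : ∃ y : Fin m → ℝ, (fun j => xc j - xstar j) = Matrix.vecMul y A) :
    ∑ i, ((∑ j, A i j ^ 2) / (∑ i', ∑ j, A i' j ^ 2)) *
        (∑ j, ((xc j + (b i - ∑ l, A i l * xc l) / (∑ l, A i l ^ 2) * A i j) - xstar j) ^ 2)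
      ≤ (1 - 1 / ((∑ i', ∑ j, A i' j ^ 2) * cinv ^ 2)) * ∑ j, (xc j - xstar j) ^ 2 := by
  have hSpos : (0:ℝ) < ∑ i', ∑ j, A i' j ^ 2 := rk_S_pos A hA
  set S := ∑ i', ∑ j, A i' j ^ 2 with hS
  set w : Fin n → ℝ := fun j => xc j - xstar j with hw
  set W := ∑ j, w j ^ 2 with hW
  have hWnn : 0 ≤ W := Finset.sum_nonneg fun j _ => sq_nonneg _
  have herr : ∀ i, ∑ j, ((xc j + (b i - ∑ l, A i l * xc l) / (∑ l, A i l ^ 2) * A i j)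
      - xstar j) ^ 2 = W - (∑ l, A i l * w l) ^ 2 / (∑ l, A i l ^ 2) := by
    intro i
    rw [show (∑ j, ((xc j + (b i - ∑ l, A i l * xc l) / (∑ l, A i l ^ 2) * A i j) - xstar j) ^ 2)
        = ∑ j, (w j + (-(∑ l, A i l * w l)) / (∑ l, A i l ^ 2) * A i j) ^ 2 by
      apply Finset.sum_congr rfl; intro j _
      rw [rk_res' A b xstar hb xc i]
      simp only [hw]; ring]
    exact rk_key A w i
  have hmv : ∀ i, A.mulVec w i = ∑ l, A i l * w l := fun i => rfl
  have hsplit : ∀ i : Fin m, ((∑ j, A i j ^ 2) / S) * (W - (∑ l, A i l * w l) ^ 2 / (∑ l, A i l ^ 2))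
      = ((∑ j, A i j ^ 2) / S) * W - (∑ l, A i l * w l) ^ 2 / S := by
    intro i
    by_cases h0 : (∑ j, A i j ^ 2) = 0
    · have hrow : ∀ j, A i j = 0 := by
        intro j
        have := (Finset.sum_eq_zero_iff_of_nonneg (fun j _ => sq_nonneg (A i j))).mp h0 j
          (Finset.mem_univ j)
        exact pow_eq_zero_iff (by norm_num) |>.mp this
      have hc0 : (∑ l, A i l * w l) = 0 :=
        Finset.sum_eq_zero fun l _ => by rw [hrow l]; ring
      simp [h0, hc0]
    · field_simp
  calc ∑ i, ((∑ j, A i j ^ 2) / S) *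
        (∑ j, ((xc j + (b i - ∑ l, A i l * xc l) / (∑ l, A i l ^ 2) * A i j) - xstar j) ^ 2)
      = ∑ i, (((∑ j, A i j ^ 2) / S) * W - (∑ l, A i l * w l) ^ 2 / S) := by
        apply Finset.sum_congr rfl; intro i _; rw [herr i, hsplit i]
    _ = W - (∑ i, (A.mulVec w i) ^ 2) / S := by
        rw [Finset.sum_sub_distrib]
        congr 1
        · rw [← Finset.sum_mul, ← Finset.sum_div, ← hS, div_self (ne_of_gt hSpos), one_mul]
        · rw [← Finset.sum_div]
          exact congrArg (· / S) (Finset.sum_congr rfl fun i _ => by rw [hmv i])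
    _ ≤ (1 - 1 / (S * cinv ^ 2)) * W := by
        have h1 : W ≤ cinv ^ 2 * ∑ i, (A.mulVec w i) ^ 2 := hcinv w hx
        have h2 : W / cinv ^ 2 ≤ ∑ i, (A.mulVec w i) ^ 2 := by
          rw [div_le_iff₀ (by positivity)]; nlinarith
        have h3 : W / cinv ^ 2 / S ≤ (∑ i, (A.mulVec w i) ^ 2) / S :=
          div_le_div_of_nonneg_right h2 hSpos.le
        have heq : (1 - 1 / (S * cinv ^ 2)) * W = W - W / cinv ^ 2 / S := by
          field_simp
        rw [heq]
        linarith

lemma rk_stepB (b : Fin m → ℝ) (xstar : Fin n → ℝ) (xc : Fin n → ℝ)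
    (hx : ∃ y : Fin m → ℝ, (fun j => xc j - xstar j) = Matrix.vecMul y A) (i : Fin m) :
    ∃ y : Fin m → ℝ, (fun j => (xc j + (b i - ∑ l, A i l * xc l) / (∑ l, A i l ^ 2) * A i j)
      - xstar j) = Matrix.vecMul y A := by
  obtain ⟨y, hy⟩ := hx
  set t := (b i - ∑ l, A i l * xc l) / (∑ l, A i l ^ 2) with ht
  refine ⟨fun i' => y i' + if i' = i then t else 0, ?_⟩
  funext j
  have hyj := congrFun hy j
  simp only [Matrix.vecMul, dotProduct] at hyj ⊢
  rw [Finset.sum_congr rfl (fun i' (_ : i' ∈ Finset.univ) =>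
    add_mul (y i') (if i' = i then t else 0) (A i' j)), Finset.sum_add_distrib]
  simp only [ite_mul, zero_mul, Finset.sum_ite_eq', Finset.mem_univ, if_true]
  linarith [hyj]

end RKacz3


section RKmain
variable {m n : ℕ}

lemma rk_main (A : Matrix (Fin m) (Fin n) ℝ) (hA : A ≠ 0)
    (cinv : ℝ) (hcinv0 : 0 < cinv)
    (hcinv : ∀ w : Fin n → ℝ, (∃ y : Fin m → ℝ, w = Matrix.vecMul y A) →
      (∑ j, w j ^ 2) ≤ cinv ^ 2 * ∑ i, (A.mulVec w i) ^ 2)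
    (b : Fin m → ℝ) (xstar : Fin n → ℝ) (hb : A.mulVec xstar = b) :
    ∀ (T : ℕ) (x0 : Fin n → ℝ),
      (∃ y : Fin m → ℝ, (fun j => x0 j - xstar j) = Matrix.vecMul y A) →
      ∀ x : (Fin T → Fin m) → ℕ → Fin n → ℝ,
      (∀ r, x r 0 = x0) →
      (∀ (r : Fin T → Fin m) (k : Fin T),
        x r (k.1 + 1) = fun j => x r k.1 j +
          (b (r k) - ∑ l, A (r k) l * x r k.1 l) / (∑ l, A (r k) l ^ 2) * A (r k) j) →
      ∑ r : Fin T → Fin m, (∏ k, (∑ j, A (r k) j ^ 2) / (∑ i', ∑ j, A i' j ^ 2)) *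
          (∑ j, (x r T j - xstar j) ^ 2)
        ≤ (1 - 1 / ((∑ i', ∑ j, A i' j ^ 2) * cinv ^ 2)) ^ T * ∑ j, (x0 j - xstar j) ^ 2 := by
  have hSpos : (0:ℝ) < ∑ i', ∑ j, A i' j ^ 2 := rk_S_pos A hA
  have hcap : 1 ≤ (∑ i', ∑ j, A i' j ^ 2) * cinv ^ 2 := rk_cap A hA cinv hcinv
  set S := ∑ i', ∑ j, A i' j ^ 2 with hS
  have hfac0 : (0:ℝ) ≤ 1 - 1 / (S * cinv ^ 2) := by
    have : 1 / (S * cinv ^ 2) ≤ 1 := by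
      rw [div_le_one (by positivity)]; exact hcap
    linarith
  intro T
  induction T with
  | zero =>
    intro x0 hx0 x hinit hstep
    rw [Fintype.sum_unique]
    simp [hinit]
  | succ T ih =>
    intro x0 hx0 x hinit hstep
    -- one explicit step from x0 with row i
    set x1 : Fin m → Fin n → ℝ := fun i j =>
      x0 j + (b i - ∑ l, A i l * x0 l) / (∑ l, A i l ^ 2) * A i j with hx1
    have hx1mem : ∀ i, ∃ y : Fin m → ℝ,
        (fun j => x1 i j - xstar j) = Matrix.vecMul y A := fun i =>
      rk_stepB A b xstar x0 hx0 i
    -- reindex the sum over sequences via cons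
    have hsum : ∑ r : Fin (T + 1) → Fin m,
        (∏ k, (∑ j, A (r k) j ^ 2) / S) * (∑ j, (x r (T + 1) j - xstar j) ^ 2)
        = ∑ i : Fin m, ∑ r' : Fin T → Fin m,
          (∏ k : Fin (T + 1), (∑ j, A ((Fin.cons i r' : Fin (T+1) → Fin m) k) j ^ 2) / S) *
            (∑ j, (x (Fin.cons i r') (T + 1) j - xstar j) ^ 2) := by
      rw [← Equiv.sum_comp (Fin.consEquiv fun _ => Fin m)
        (fun r => (∏ k, (∑ j, A (r k) j ^ 2) / S) * (∑ j, (x r (T + 1) j - xstar j) ^ 2)),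
        Fintype.sum_prod_type]
      rfl
    rw [hsum]
    -- for each i, apply IH to the shifted process
    have hkey : ∀ i : Fin m, ∑ r' : Fin T → Fin m,
        (∏ k : Fin T, (∑ j, A (r' k) j ^ 2) / S) *
          (∑ j, (x (Fin.cons i r') (T + 1) j - xstar j) ^ 2)
        ≤ (1 - 1 / (S * cinv ^ 2)) ^ T * ∑ j, (x1 i j - xstar j) ^ 2 := by
      intro i
      refine ih (x1 i) (hx1mem i) (fun r' k => x (Fin.cons i r') (k + 1)) ?_ ?_
      · intro r'
        have h := hstep (Fin.cons i r') 0
        simp only [Fin.cons_zero, Fin.val_zero, zero_add] at h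
        show x (Fin.cons i r') (0 + 1) = x1 i
        rw [zero_add, h]
        funext j
        rw [hinit]
      · intro r' k
        have h := hstep (Fin.cons i r') k.succ
        simp only [Fin.cons_succ, Fin.val_succ] at h
        exact h
    calc ∑ i : Fin m, ∑ r' : Fin T → Fin m,
        (∏ k : Fin (T + 1), (∑ j, A ((Fin.cons i r' : Fin (T+1) → Fin m) k) j ^ 2) / S) *
          (∑ j, (x (Fin.cons i r') (T + 1) j - xstar j) ^ 2)
        = ∑ i : Fin m, ((∑ j, A i j ^ 2) / S) * ∑ r' : Fin T → Fin m,
          (∏ k : Fin T, (∑ j, A (r' k) j ^ 2) / S) *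
            (∑ j, (x (Fin.cons i r') (T + 1) j - xstar j) ^ 2) := by
          apply Finset.sum_congr rfl; intro i _
          rw [Finset.mul_sum]
          apply Finset.sum_congr rfl; intro r' _
          rw [Fin.prod_univ_succ]
          simp only [Fin.cons_zero, Fin.cons_succ]
          ring
      _ ≤ ∑ i : Fin m, ((∑ j, A i j ^ 2) / S) *
            ((1 - 1 / (S * cinv ^ 2)) ^ T * ∑ j, (x1 i j - xstar j) ^ 2) := by
          apply Finset.sum_le_sum; intro i _
          exact mul_le_mul_of_nonneg_left (hkey i)
            (div_nonneg (Finset.sum_nonneg fun j _ => sq_nonneg _) hSpos.le)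
      _ = (1 - 1 / (S * cinv ^ 2)) ^ T * ∑ i : Fin m, ((∑ j, A i j ^ 2) / S) *
            (∑ j, (x1 i j - xstar j) ^ 2) := by
          rw [Finset.mul_sum]
          apply Finset.sum_congr rfl; intro i _; ring
      _ ≤ (1 - 1 / (S * cinv ^ 2)) ^ T *
            ((1 - 1 / (S * cinv ^ 2)) * ∑ j, (x0 j - xstar j) ^ 2) := by
          apply mul_le_mul_of_nonneg_left _ (pow_nonneg hfac0 T)
          exact rk_stepA A hA cinv hcinv0 hcinv b xstar hb x0 hx0
      _ = (1 - 1 / (S * cinv ^ 2)) ^ (T + 1) * ∑ j, (x0 j - xstar j) ^ 2 := by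
          ring

end RKmain

/-- After `T` steps of the randomized Kaczmarz iteration
`x_{k+1} = x_k + ((b_{r_k} − ⟨A_{r_k*}, x_k⟩)/‖A_{r_k*}‖²) A_{r_k*}`, with the indices
`r_0, …, r_{T-1}` i.i.d. sampled with probability proportional to squared row norms,
starting from `x_0` with `x_0 − x_*` in the row space of `A` (where `A x_* = b`),
one has `E[‖x_T − x_*‖²] ≤ (1 − κ_F⁻²)^T ‖x_0 − x_*‖²`.
The expectation is a sum over all index sequences `r : Fin T → Fin m`, weighted by
`∏ k, ‖A_{r_k*}‖²/‖A‖_F²`.  `cinv` stands for `‖A⁻¹‖`. -/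
theorem stmt2 (m n T : ℕ) (A : Matrix (Fin m) (Fin n) ℝ) (hA : A ≠ 0)
    (cinv : ℝ) (hcinv0 : 0 < cinv)
    (hcinv : ∀ w : Fin n → ℝ, (∃ y : Fin m → ℝ, w = Matrix.vecMul y A) →
      (∑ j, w j ^ 2) ≤ cinv ^ 2 * ∑ i, (A.mulVec w i) ^ 2)
    (b : Fin m → ℝ) (xstar x0 : Fin n → ℝ)
    (hb : A.mulVec xstar = b)
    (hx0 : ∃ y : Fin m → ℝ, (fun j => x0 j - xstar j) = Matrix.vecMul y A)
    (x : (Fin T → Fin m) → ℕ → Fin n → ℝ)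
    (hinit : ∀ r, x r 0 = x0)
    (hstep : ∀ (r : Fin T → Fin m) (k : Fin T),
      x r (k.1 + 1) = fun j => x r k.1 j +
        (b (r k) - ∑ l, A (r k) l * x r k.1 l) / (∑ l, A (r k) l ^ 2) * A (r k) j) :
    ∑ r : Fin T → Fin m, (∏ k, (∑ j, A (r k) j ^ 2) / (∑ i', ∑ j, A i' j ^ 2)) *
        (∑ j, (x r T j - xstar j) ^ 2)
      ≤ (1 - 1 / ((∑ i', ∑ j, A i' j ^ 2) * cinv ^ 2)) ^ T * ∑ j, (x0 j - xstar j) ^ 2 := by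
  exact rk_main A hA cinv hcinv0 hcinv b xstar hb T x0 hx0 x hinit hstep
end

section
/- With D as in the importance-sampling construction (d i.i.d. column indices sampled with probability ‖A_{*j}‖²/‖A‖_F²), for a unit row vector u and a fixed vector x, the variance of μ = ⟨u, (I − D) x⟩ satisfies Var[μ] ≤ ‖A‖_F² ‖x‖² / (d · min_{j∈[n]} ‖A_{*j}‖²). -/
open Finset

private lemma sum_pi_prod {d n : ℕ} (g : Fin d → Fin n → ℝ) :
    ∑ S : Fin d → Fin n, ∏ t, g t (S t) = ∏ t, ∑ j, g t j := by
  rw [Finset.prod_univ_sum, Fintype.piFinset_univ]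

private lemma E_pair {d n : ℕ} (p h k : Fin n → ℝ) (hp : ∑ j, p j = 1) (t t' : Fin d) :
    ∑ S : Fin d → Fin n, (∏ r, p (S r)) * (h (S t) * k (S t'))
      = if t = t' then ∑ j, p j * (h j * k j)
        else (∑ j, p j * h j) * (∑ j, p j * k j) := by
  have key : ∑ S : Fin d → Fin n, (∏ r, p (S r)) * (h (S t) * k (S t'))
      = ∏ r, ∑ j, p j * ((if r = t then h j else 1) * (if r = t' then k j else 1)) := by
    rw [← sum_pi_prod (fun r j => p j * ((if r = t then h j else 1) * (if r = t' then k j else 1)))]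
    refine Finset.sum_congr rfl fun S _ => ?_
    simp only [Finset.prod_mul_distrib, Finset.prod_ite_eq', Finset.mem_univ, if_true]
  rw [key]
  by_cases htt : t = t'
  · subst htt
    simp only [if_pos rfl]
    rw [Finset.prod_eq_single t]
    · simp
    · intro b _ hb
      simp [hb, hp]
    · simp
  · simp only [if_neg htt]
    rw [← Finset.mul_prod_erase univ _ (Finset.mem_univ t),
        ← Finset.mul_prod_erase (univ.erase t) _
          (Finset.mem_erase.2 ⟨Ne.symm htt, Finset.mem_univ t'⟩)]
    have h1 : ∀ r ∈ (univ.erase t).erase t',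
        (∑ j, p j * ((if r = t then h j else 1) * (if r = t' then k j else 1))) = 1 := by
      intro r hr
      have h2 := Finset.mem_erase.1 hr
      have h3 := Finset.mem_erase.1 h2.2
      simp [h2.1, h3.1, hp]
    rw [Finset.prod_eq_one h1]
    simp [htt, Ne.symm htt]

private lemma main_aux {d n : ℕ} (hd : 0 < d) [Nonempty (Fin n)]
    (w : Fin n → ℝ) (hw : ∀ j, 0 < w j)
    (u x : Fin n → ℝ) (hu : ∑ j, u j ^ 2 = 1)
    (W : ℝ) (hW : W = ∑ j, w j)
    (μ : (Fin d → Fin n) → ℝ)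
    (hμ : ∀ S, μ S = (∑ j, u j * x j) -
      (1 / (d : ℝ)) * ∑ t, u (S t) * x (S t) * (W / w (S t))) :
    (∑ S : Fin d → Fin n, (∏ t, w (S t) / W) * μ S ^ 2)
      - (∑ S : Fin d → Fin n, (∏ t, w (S t) / W) * μ S) ^ 2
      ≤ W * (∑ j, x j ^ 2) / ((d : ℝ) * univ.inf' univ_nonempty w) := by
  -- main proof
  have hWpos : 0 < W := hW ▸ Finset.sum_pos (fun j _ => hw j) univ_nonempty
  set p : Fin n → ℝ := fun j => w j / W with hp_def
  set c : ℝ := ∑ j, u j * x j with hc_def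
  set f : Fin n → ℝ := fun j => u j * x j * (W / w j) with hf_def
  set q : Fin n → ℝ := fun j => c - f j with hq_def
  have hp1 : ∑ j, p j = 1 := by
    simp only [hp_def]
    rw [← Finset.sum_div, ← hW, div_self hWpos.ne']
  have hpf : ∀ j, p j * f j = u j * x j := by
    intro j
    simp only [hp_def, hf_def]
    field_simp [(hw j).ne', hWpos.ne']
  have hpfsum : ∑ j, p j * f j = c := by
    rw [hc_def]; exact Finset.sum_congr rfl fun j _ => hpf j
  have hpq : ∑ j, p j * q j = 0 := by
    have e : ∀ j, p j * q j = c * p j - p j * f j := by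
      intro j; simp only [hq_def]; ring
    rw [Finset.sum_congr rfl fun j _ => e j, Finset.sum_sub_distrib, ← Finset.mul_sum,
      hp1, hpfsum]
    ring
  have hdR : (0:ℝ) < d := Nat.cast_pos.2 hd
  have hμ' : ∀ S, μ S = (1/(d:ℝ)) * ∑ t, q (S t) := by
    intro S
    rw [hμ S]
    simp only [hq_def, hf_def]
    rw [Finset.sum_sub_distrib, Finset.sum_const, Finset.card_univ, Fintype.card_fin]
    rw [mul_sub, nsmul_eq_mul]
    rw [one_div, inv_mul_cancel_left₀ hdR.ne']
  have Eq1 : ∀ t : Fin d, ∑ S : Fin d → Fin n, (∏ r, p (S r)) * q (S t) = 0 := by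
    intro t
    have h := E_pair p q (fun _ => 1) hp1 t t
    simpa [hpq] using h
  have Eμ : (∑ S : Fin d → Fin n, (∏ r, p (S r)) * μ S) = 0 := by
    have e : ∀ S : Fin d → Fin n, (∏ r, p (S r)) * μ S
        = (1/(d:ℝ)) * ∑ t, (∏ r, p (S r)) * q (S t) := by
      intro S
      rw [hμ' S]
      simp only [Finset.mul_sum]
      exact Finset.sum_congr rfl fun t _ => by ring
    rw [Finset.sum_congr rfl fun S _ => e S, ← Finset.mul_sum, Finset.sum_comm]
    rw [Finset.sum_congr rfl fun t (_ : t ∈ univ) => Eq1 t]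
    simp
  have Eq2 : ∀ t t' : Fin d, ∑ S : Fin d → Fin n, (∏ r, p (S r)) * (q (S t) * q (S t'))
      = if t = t' then ∑ j, p j * q j ^ 2 else 0 := by
    intro t t'
    rw [E_pair p q q hp1 t t']
    by_cases h : t = t'
    · simp only [if_pos h]
      exact Finset.sum_congr rfl fun j _ => by ring
    · simp [h, hpq]
  have Eμ2 : ∑ S : Fin d → Fin n, (∏ r, p (S r)) * μ S ^ 2
      = (1/(d:ℝ)) * ∑ j, p j * q j ^ 2 := by
    have e : ∀ S : Fin d → Fin n, (∏ r, p (S r)) * μ S ^ 2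
        = (1/(d:ℝ))^2 * ∑ t, ∑ t', (∏ r, p (S r)) * (q (S t) * q (S t')) := by
      intro S
      rw [hμ' S, mul_pow, sq (∑ t, q (S t)), Finset.sum_mul_sum]
      simp only [Finset.mul_sum]
      exact Finset.sum_congr rfl fun t _ => Finset.sum_congr rfl fun t' _ => by ring
    rw [Finset.sum_congr rfl fun S _ => e S, ← Finset.mul_sum, Finset.sum_comm]
    have e2 : ∀ t : Fin d, (∑ S : Fin d → Fin n, ∑ t', (∏ r, p (S r)) * (q (S t) * q (S t')))
        = ∑ j, p j * q j ^ 2 := by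
      intro t
      rw [Finset.sum_comm]
      rw [Finset.sum_congr rfl fun t' (_ : t' ∈ univ) => Eq2 t t']
      simp
    rw [Finset.sum_congr rfl fun t (_ : t ∈ univ) => e2 t, Finset.sum_const,
      Finset.card_univ, Fintype.card_fin, nsmul_eq_mul]
    rw [sq]
    field_simp
  set m0 : ℝ := univ.inf' univ_nonempty w with hm0_def
  obtain ⟨j0, _, hj0⟩ := Finset.exists_mem_eq_inf' (univ_nonempty) w
  have hm0pos : 0 < m0 := by rw [hm0_def, hj0]; exact hw j0
  have hm0le : ∀ j, m0 ≤ w j := fun j => Finset.inf'_le _ (Finset.mem_univ j)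
  have hqf : ∑ j, p j * q j ^ 2 ≤ ∑ j, p j * f j ^ 2 := by
    have e : ∑ j, p j * q j ^ 2 = (∑ j, p j * f j ^ 2) - c ^ 2 := by
      have e1 : ∀ j, p j * q j ^ 2 = p j * f j ^ 2 - 2 * c * (p j * f j) + c ^ 2 * p j := by
        intro j; simp only [hq_def]; ring
      rw [Finset.sum_congr rfl fun j _ => e1 j, Finset.sum_add_distrib,
        Finset.sum_sub_distrib, ← Finset.mul_sum, ← Finset.mul_sum, hp1, hpfsum]
      ring
    rw [e]
    nlinarith [sq_nonneg c]
  have hfb : ∑ j, p j * f j ^ 2 ≤ (W / m0) * ∑ j, x j ^ 2 := by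
    rw [Finset.mul_sum]
    refine Finset.sum_le_sum fun j _ => ?_
    have h1 : p j * f j ^ 2 = (u j) ^ 2 * ((x j) ^ 2 * (W / w j)) := by
      simp only [hp_def, hf_def]
      field_simp [(hw j).ne', hWpos.ne']
    rw [h1]
    have hu2 : (u j) ^ 2 ≤ 1 :=
      hu ▸ Finset.single_le_sum (fun j' _ => sq_nonneg (u j')) (Finset.mem_univ j)
    have hWw : W / w j ≤ W / m0 := by
      gcongr <;> first | exact hWpos.le | exact hm0pos | exact hm0le j
    have hnn : (0:ℝ) ≤ (x j) ^ 2 * (W / w j) :=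
      mul_nonneg (sq_nonneg _) (div_nonneg hWpos.le (hw j).le)
    calc (u j) ^ 2 * ((x j) ^ 2 * (W / w j)) ≤ 1 * ((x j) ^ 2 * (W / w j)) :=
          mul_le_mul_of_nonneg_right hu2 hnn
      _ = (x j) ^ 2 * (W / w j) := one_mul _
      _ ≤ (x j) ^ 2 * (W / m0) := mul_le_mul_of_nonneg_left hWw (sq_nonneg _)
      _ = W / m0 * (x j) ^ 2 := mul_comm _ _
  have hx : (0:ℝ) ≤ ∑ j, x j ^ 2 := Finset.sum_nonneg fun j _ => sq_nonneg _
  rw [Eμ, Eμ2]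
  have final : (1/(d:ℝ)) * ((W / m0) * ∑ j, x j ^ 2) = W * (∑ j, x j ^ 2) / ((d:ℝ) * m0) := by
    field_simp
  calc (1/(d:ℝ)) * ∑ j, p j * q j ^ 2 - 0 ^ 2
      = (1/(d:ℝ)) * ∑ j, p j * q j ^ 2 := by ring
    _ ≤ (1/(d:ℝ)) * ∑ j, p j * f j ^ 2 :=
        mul_le_mul_of_nonneg_left hqf (by positivity)
    _ ≤ (1/(d:ℝ)) * ((W / m0) * ∑ j, x j ^ 2) :=
        mul_le_mul_of_nonneg_left hfb (by positivity)
    _ = W * (∑ j, x j ^ 2) / ((d:ℝ) * m0) := final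

/-- With `D` as in the importance-sampling construction (`d` i.i.d. column
indices sampled with probability `‖A_{*j}‖²/‖A‖_F²`), for a unit row vector `u` and a
fixed vector `x`, the variance of `μ = ⟨u, (I − D)x⟩` satisfies
`Var[μ] ≤ ‖A‖_F² ‖x‖² / (d · min_j ‖A_{*j}‖²)`. -/
theorem stmt5 (m n d : ℕ) (hd : 0 < d) [Nonempty (Fin n)]
    (A : Matrix (Fin m) (Fin n) ℝ)
    (hcol : ∀ j : Fin n, (∑ i, A i j ^ 2) ≠ 0)
    (u x : Fin n → ℝ) (hu : ∑ j, u j ^ 2 = 1)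
    (μ : (Fin d → Fin n) → ℝ)
    (hμ : ∀ S, μ S = (∑ j, u j * x j) -
      (1 / (d : ℝ)) * ∑ t, u (S t) * x (S t) *
        ((∑ i, ∑ j, A i j ^ 2) / (∑ i, A i (S t) ^ 2))) :
    (∑ S : Fin d → Fin n, (∏ t, (∑ i, A i (S t) ^ 2) / (∑ i, ∑ j, A i j ^ 2)) * μ S ^ 2)
      - (∑ S : Fin d → Fin n,
          (∏ t, (∑ i, A i (S t) ^ 2) / (∑ i, ∑ j, A i j ^ 2)) * μ S) ^ 2
      ≤ (∑ i, ∑ j, A i j ^ 2) * (∑ j, x j ^ 2) /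
          ((d : ℝ) * Finset.univ.inf' Finset.univ_nonempty (fun j : Fin n => ∑ i, A i j ^ 2)) := by
  have hw : ∀ j : Fin n, 0 < ∑ i, A i j ^ 2 := fun j =>
    lt_of_le_of_ne (Finset.sum_nonneg fun i _ => sq_nonneg _) (Ne.symm (hcol j))
  exact main_aux hd (fun j => ∑ i, A i j ^ 2) hw u x hu _ Finset.sum_comm μ hμ
end

section
/- Perturbed randomized Kaczmarz convergence: consider the iteration x_{k+1} = x_k + (b̃_{r_k} − ⟨Ã_{r_k*}, x_k⟩) Ã_{r_k*} + μ_k Ã_{r_k*}, where Ã_{r*} = A_{r*}/‖A_{r*}‖ and b̃_r = b_r/‖A_{r*}‖, r_k sampled with probability ‖A_{r*}‖²/‖A‖_F², and μ_k is a random perturbation with conditional mean 0 and conditional variance at most (ε²/(4T)) ‖x_k‖² for T = κ_F² log(2/ε²). Then after T iterations starting from x_0 = 0, E[‖x_T − x_*‖²] ≤ ε² ‖x_*‖² (assuming A x_* = b and x_* in the row space of A). -/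
/-!
Write `e_k = x_k - x_*` and let `u` be the sampled normalized row. Since `b = A x_*`, one step is
`e_{k+1} = e_k + (μ_k - ⟨u, e_k⟩) u`, and as `‖u‖ = 1` the cross terms cancel exactly:
`‖e_{k+1}‖² = ‖e_k‖² - ⟨u, e_k⟩² + μ_k²`. Averaging over the row gives
`‖e_k‖² - ‖A e_k‖² / ‖A‖_F² ≤ (1 - κ_F⁻²) ‖e_k‖²`, because `e_k` stays in the row space, where
`‖e‖ ≤ cinv ‖A e‖`; the perturbation adds at most `δ E‖x_k‖²` with `δ = ε² / (4T)`.
As the perturbation has mean zero, `E e_k = -M^k x_*` for the positive semidefinite matrix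
`M = I - AᵀA / ‖A‖_F²`, so `E⟨x_*, e_k⟩ ≤ 0` and `E‖x_k‖² ≤ E‖e_k‖² + ‖x_*‖²`. Unrolling
`E‖e_{k+1}‖² ≤ (1 - κ_F⁻² + δ) E‖e_k‖² + δ ‖x_*‖²` over `T = κ_F² log (2/ε²)` steps leaves at most
`(ε²/2) e^{ε²/4} ‖x_*‖² + (ε²/4) ‖x_*‖² ≤ ε² ‖x_*‖²`.

The expectation over the `T` independent draws is taken one draw at a time: `x_k` does not depend
on the `k`-th draw, so resampling that coordinate averages the step over a fresh draw.
-/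

open Finset Function Matrix Real

section ProductWeights

variable {ι C : Type*} [Fintype ι] [DecidableEq ι]

theorem prod_update_mul {M : Type*} [CommMonoid M] (q : C → M) (ω : ι → C) (k : ι) (c : C) :
    (∏ j, q (update ω k c j)) * q (ω k) = (∏ j, q (ω j)) * q c := by
  have hcompl : ∏ j ∈ {k}ᶜ, q (update ω k c j) = ∏ j ∈ {k}ᶜ, q (ω j) :=
    prod_congr rfl fun j hj => by rw [update_of_ne (by simpa using hj)]
  rw [Fintype.prod_eq_mul_prod_compl k, Fintype.prod_eq_mul_prod_compl k (fun j => q (ω j)),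
    hcompl, update_self]
  ac_rfl

variable [Fintype C] {q : C → ℝ}

theorem sum_prod_eq_one (hq : ∑ c, q c = 1) : ∑ ω : ι → C, ∏ k, q (ω k) = 1 := by
  simp [← Fintype.prod_sum, hq]

theorem sum_prod_smul_eq_sum_prod_smul_sum {V β : Type*} [AddCommMonoid V] [Module ℝ V]
    (hq : ∑ c, q c = 1) (k : ι) {h : (ι → C) → β}
    (hh : ∀ ω c, h (update ω k c) = h ω) (f : C → β → V) :
    ∑ ω, (∏ j, q (ω j)) • f (ω k) (h ω) = ∑ ω, (∏ j, q (ω j)) • ∑ c, q c • f c (h ω) := by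
  -- `σ` swaps the `k`-th draw with a fresh one: an involution preserving `(∏ j, q (ω j)) * q c`.
  let σ : (ι → C) × C → (ι → C) × C := fun p => (update p.1 k p.2, p.1 k)
  have hσ : Involutive σ := fun p => by simp [σ]
  calc ∑ ω, (∏ j, q (ω j)) • f (ω k) (h ω)
      = ∑ p : (ι → C) × C, ((∏ j, q (p.1 j)) * q p.2) • f (p.1 k) (h p.1) := by
        simp [Fintype.sum_prod_type, mul_smul, ← smul_sum, ← sum_smul, hq]
    _ = ∑ p : (ι → C) × C, ((∏ j, q ((σ p).1 j)) * q (σ p).2) • f ((σ p).1 k) (h (σ p).1) :=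
        (Equiv.sum_comp hσ.toPerm _).symm
    _ = ∑ ω, (∏ j, q (ω j)) • ∑ c, q c • f c (h ω) := by
        simp [σ, prod_update_mul, hh, Fintype.sum_prod_type, smul_sum, mul_smul]

end ProductWeights

section Iterates

variable {C β : Type*} {T : ℕ} {x : (Fin T → C) → ℕ → β} {F : ℕ → C → β → β}

theorem iterate_update_eq (h0 : ∀ ω ω', x ω 0 = x ω' 0)
    (hF : ∀ ω (k : Fin T), x ω (k + 1) = F k (ω k) (x ω k)) (k : Fin T) (ω : Fin T → C) (c : C) :
    x (update ω k c) k = x ω k := by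
  suffices ∀ j ≤ (k : ℕ), x (update ω k c) j = x ω j from this k le_rfl
  intro j hj
  induction j with
  | zero => exact h0 _ _
  | succ j ih =>
    have hjk : (⟨j, by omega⟩ : Fin T) ≠ k := Fin.ne_of_val_ne (by simp; omega)
    rw [hF _ ⟨j, by omega⟩, hF _ ⟨j, by omega⟩, ih (by omega), update_of_ne hjk]

theorem sum_prod_smul_iterate_succ [Fintype C] {q : C → ℝ} {V : Type*} [AddCommMonoid V]
    [Module ℝ V] (hq : ∑ c, q c = 1) (h0 : ∀ ω ω', x ω 0 = x ω' 0)
    (hF : ∀ ω (k : Fin T), x ω (k + 1) = F k (ω k) (x ω k)) (k : Fin T) (φ : β → V) :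
    ∑ ω, (∏ j, q (ω j)) • φ (x ω (k + 1)) = ∑ ω, (∏ j, q (ω j)) • ∑ c, q c • φ (F k c (x ω k)) := by
  simp_rw [hF]
  exact sum_prod_smul_eq_sum_prod_smul_sum hq k (iterate_update_eq h0 hF k)
    fun c v => φ (F k c v)

end Iterates

theorem le_pow_mul_add_of_le_mul_add {u : ℕ → ℝ} {ρ d : ℝ} {T : ℕ} (hρ0 : 0 ≤ ρ) (hρ1 : ρ ≤ 1)
    (hd : 0 ≤ d) (hu : ∀ k < T, u (k + 1) ≤ ρ * u k + d) : u T ≤ ρ ^ T * u 0 + T * d := by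
  suffices ∀ k ≤ T, u k ≤ ρ ^ k * u 0 + k * d from this T le_rfl
  intro k hk
  induction k with
  | zero => simp
  | succ k ih =>
    have hkd : ρ * (k * d) ≤ k * d := mul_le_of_le_one_left (by positivity) hρ1
    calc u (k + 1) ≤ ρ * u k + d := hu k (by omega)
      _ ≤ ρ * (ρ ^ k * u 0 + k * d) + d := by gcongr; exact ih (by omega)
      _ ≤ ρ ^ (k + 1) * u 0 + (k + 1 : ℕ) * d := by push_cast; rw [pow_succ']; linarith

theorem exp_sq_div_four_sub_log_le {ε : ℝ} (hε0 : 0 < ε) (hε1 : ε < 1) :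
    exp (ε ^ 2 / 4 - log (2 / ε ^ 2)) ≤ 2 / 3 * ε ^ 2 := by
  have hε2 : ε ^ 2 < 1 := by nlinarith
  have hexp : exp (ε ^ 2 / 4) ≤ 4 / 3 := by
    have := exp_bound_div_one_sub_of_interval' (x := ε ^ 2 / 4) (by positivity) (by linarith)
    have : 1 / (1 - ε ^ 2 / 4) ≤ 4 / 3 := by rw [div_le_iff₀ (by linarith)]; linarith
    linarith
  rw [exp_sub, exp_log (by positivity), div_div_eq_mul_div]
  calc exp (ε ^ 2 / 4) * ε ^ 2 / 2 ≤ 4 / 3 * ε ^ 2 / 2 := by gcongr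
    _ = 2 / 3 * ε ^ 2 := by ring

theorem le_sq_mul_of_le_mul_add {u : ℕ → ℝ} {K ε Z : ℝ} {T : ℕ} (hK : 1 ≤ K) (hε0 : 0 < ε)
    (hε1 : ε < 1) (hT : (T : ℝ) = K * log (2 / ε ^ 2)) (hZ : 0 ≤ Z) (h0 : u 0 ≤ Z)
    (hu : ∀ k < T, u (k + 1) ≤ (1 - K⁻¹ + ε ^ 2 / (4 * T)) * u k + ε ^ 2 / (4 * T) * Z) :
    u T ≤ ε ^ 2 * Z := by
  set L := log (2 / ε ^ 2)
  set δ := ε ^ 2 / (4 * T) with hδ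
  have hL : 1 / 4 < L := by
    have : log 2 ≤ L := log_le_log two_pos (by rw [le_div_iff₀ (by positivity)]; nlinarith)
    linarith [log_two_gt_d9]
  have hT0 : (0 : ℝ) < T := by rw [hT]; positivity
  have hδT : T * δ = ε ^ 2 / 4 := by rw [hδ]; field_simp
  have hKT : T * K⁻¹ = L := by rw [hT]; field_simp
  have hρ0 : 0 ≤ 1 - K⁻¹ + δ := by
    have : K⁻¹ ≤ 1 := inv_le_one_of_one_le₀ hK
    have : 0 ≤ δ := by positivity
    linarith
  have hρ1 : 1 - K⁻¹ + δ ≤ 1 := by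
    have : T * δ ≤ T * K⁻¹ := by nlinarith
    linarith [le_of_mul_le_mul_left this hT0]
  have hpow : (1 - K⁻¹ + δ) ^ T ≤ 2 / 3 * ε ^ 2 :=
    calc (1 - K⁻¹ + δ) ^ T ≤ exp (δ - K⁻¹) ^ T :=
          pow_le_pow_left₀ hρ0 (by linarith [add_one_le_exp (δ - K⁻¹)]) T
      _ = exp (ε ^ 2 / 4 - L) := by rw [← exp_nat_mul]; congr 1; linarith
      _ ≤ 2 / 3 * ε ^ 2 := exp_sq_div_four_sub_log_le hε0 hε1
  have hfirst : (1 - K⁻¹ + δ) ^ T * u 0 ≤ 2 / 3 * ε ^ 2 * Z :=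
    (mul_le_mul_of_nonneg_left h0 (pow_nonneg hρ0 T)).trans (mul_le_mul_of_nonneg_right hpow hZ)
  have hsecond : T * (δ * Z) = ε ^ 2 / 4 * Z := by rw [← mul_assoc, hδT]
  have := le_pow_mul_add_of_le_mul_add hρ0 hρ1 (by positivity) hu
  nlinarith

section DotProduct

variable {ι : Type*} [Fintype ι]

theorem sum_sq_eq_dotProduct_self (v : ι → ℝ) : ∑ j, v j ^ 2 = v ⬝ᵥ v := by
  simp [dotProduct, sq]

theorem dotProduct_self_nonneg (v : ι → ℝ) : 0 ≤ v ⬝ᵥ v := by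
  simpa using dotProduct_star_self_nonneg v

theorem add_smul_dotProduct_self {R : Type*} [CommRing R] {u : ι → R}
    (hu : u ⬝ᵥ u = 1) (e : ι → R) (μ : R) :
    (e + (μ - u ⬝ᵥ e) • u) ⬝ᵥ (e + (μ - u ⬝ᵥ e) • u) = e ⬝ᵥ e - (u ⬝ᵥ e) ^ 2 + μ ^ 2 := by
  simp only [add_dotProduct, dotProduct_add, smul_dotProduct, dotProduct_smul, hu,
    dotProduct_comm e u, smul_eq_mul]
  ring

end DotProduct

theorem mulVec_dotProduct_self_le {m n : Type*} [Fintype m] [Fintype n] (A : Matrix m n ℝ)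
    (v : n → ℝ) :
    (A *ᵥ v) ⬝ᵥ (A *ᵥ v) ≤ (∑ i, ∑ j, A i j ^ 2) * (v ⬝ᵥ v) := by
  rw [← sum_sq_eq_dotProduct_self, ← sum_sq_eq_dotProduct_self, sum_mul]
  exact sum_le_sum fun i _ => sum_mul_sq_le_sq_mul_sq univ (A i) v

noncomputable section Kaczmarz

variable {m n : Type*} [Fintype n] (A : Matrix m n ℝ)

-- The update exactly as written in the statement; `kaczmarzStep_eq` gives its vector form.
def kaczmarzStep (b : m → ℝ) (i : m) (μ : ℝ) (x : n → ℝ) : n → ℝ := fun j =>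
  x j + ((b i / √(∑ l, A i l ^ 2) - ∑ l, A i l / √(∑ l', A i l' ^ 2) * x l) + μ) *
    (A i j / √(∑ l, A i l ^ 2))

def normalizedRow (i : m) : n → ℝ := (√(∑ j, A i j ^ 2))⁻¹ • A i

def rowProb [Fintype m] (i : m) : ℝ := (∑ j, A i j ^ 2) / ∑ i, ∑ j, A i j ^ 2

def samplingWeight [Fintype m] {Ξ : Type*} (w : Ξ → ℝ) (c : m × Ξ) : ℝ := rowProb A c.1 * w c.2

def kaczmarzMeanMatrix [Fintype m] [DecidableEq n] : Matrix n n ℝ :=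
  1 - (∑ i, ∑ j, A i j ^ 2)⁻¹ • (Aᵀ * A)

variable {A}

theorem normalizedRow_dotProduct_self {i : m} (hi : ∑ j, A i j ^ 2 ≠ 0) :
    normalizedRow A i ⬝ᵥ normalizedRow A i = 1 := by
  have hpos : 0 ≤ ∑ j, A i j ^ 2 := sum_nonneg fun j _ => sq_nonneg _
  rw [normalizedRow, smul_dotProduct, dotProduct_smul, ← sum_sq_eq_dotProduct_self, smul_eq_mul,
    smul_eq_mul, ← mul_assoc, ← sq, inv_pow, Real.sq_sqrt hpos, inv_mul_cancel₀ hi]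

theorem kaczmarzStep_eq (b : m → ℝ) (i : m) (μ : ℝ) (x : n → ℝ) :
    kaczmarzStep A b i μ x =
      x + ((√(∑ l, A i l ^ 2))⁻¹ * b i - normalizedRow A i ⬝ᵥ x + μ) • normalizedRow A i := by
  ext j
  simp only [kaczmarzStep, normalizedRow, dotProduct, Pi.add_apply, Pi.smul_apply, smul_eq_mul]
  simp only [div_eq_inv_mul, mul_assoc]

theorem kaczmarzStep_sub (xs : n → ℝ) (i : m) (μ : ℝ) (x : n → ℝ) :
    kaczmarzStep A (A *ᵥ xs) i μ x - xs =
      (x - xs) + (μ - normalizedRow A i ⬝ᵥ (x - xs)) • normalizedRow A i := by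
  have hb : (√(∑ l, A i l ^ 2))⁻¹ * (A *ᵥ xs) i = normalizedRow A i ⬝ᵥ xs := by
    rw [normalizedRow, smul_dotProduct, smul_eq_mul, mulVec]
  rw [kaczmarzStep_eq, hb, dotProduct_sub]
  module

variable [Fintype m]

theorem rowProb_nonneg (i : m) : 0 ≤ rowProb A i :=
  div_nonneg (sum_nonneg fun _ _ => sq_nonneg _)
    (sum_nonneg fun _ _ => sum_nonneg fun _ _ => sq_nonneg _)

theorem sum_rowProb (hA : ∑ i, ∑ j, A i j ^ 2 ≠ 0) : ∑ i, rowProb A i = 1 := by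
  simp only [rowProb, ← sum_div, div_self hA]

theorem rowProb_mul_inv_sqrt_sq {i : m} (hi : ∑ j, A i j ^ 2 ≠ 0) :
    rowProb A i * (√(∑ j, A i j ^ 2))⁻¹ ^ 2 = (∑ i, ∑ j, A i j ^ 2)⁻¹ := by
  rw [inv_pow, Real.sq_sqrt (sum_nonneg fun _ _ => sq_nonneg _)]
  simp only [rowProb]
  field_simp

theorem frobeniusSq_pos [Nonempty m] (hrow : ∀ i, ∑ j, A i j ^ 2 ≠ 0) :
    0 < ∑ i, ∑ j, A i j ^ 2 :=
  sum_pos (fun i _ => (sum_nonneg fun _ _ => sq_nonneg _).lt_of_ne (hrow i).symm) univ_nonempty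

omit [Fintype n] in
theorem row_mem_range_vecMulLinear (i : m) : A i ∈ LinearMap.range A.vecMulLinear := by
  classical
  exact ⟨Pi.single i 1, single_one_vecMul i A⟩

theorem kaczmarzStep_mem_range (b : m → ℝ) (i : m) (μ : ℝ) {x : n → ℝ}
    (hx : x ∈ LinearMap.range A.vecMulLinear) :
    kaczmarzStep A b i μ x ∈ LinearMap.range A.vecMulLinear := by
  rw [kaczmarzStep_eq]
  exact add_mem hx (Submodule.smul_mem _ _ (Submodule.smul_mem _ _ (row_mem_range_vecMulLinear i)))

theorem one_le_frobeniusSq_mul_sq [Nonempty m] (hrow : ∀ i, ∑ j, A i j ^ 2 ≠ 0) {κ : ℝ}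
    (hκ : ∀ v ∈ LinearMap.range A.vecMulLinear, v ⬝ᵥ v ≤ κ ^ 2 * (A *ᵥ v) ⬝ᵥ (A *ᵥ v)) :
    1 ≤ (∑ i, ∑ j, A i j ^ 2) * κ ^ 2 := by
  obtain ⟨i⟩ := ‹Nonempty m›
  have hpos : 0 < A i ⬝ᵥ A i := by
    rw [← sum_sq_eq_dotProduct_self]
    exact (sum_nonneg fun _ _ => sq_nonneg _).lt_of_ne (hrow i).symm
  have := (hκ _ (row_mem_range_vecMulLinear i)).trans
    (mul_le_mul_of_nonneg_left (mulVec_dotProduct_self_le A (A i)) (sq_nonneg κ))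
  exact le_of_mul_le_mul_right (by linarith) hpos

theorem posSemidef_kaczmarzMeanMatrix [DecidableEq n] : (kaczmarzMeanMatrix A).PosSemidef := by
  rw [posSemidef_iff_dotProduct_mulVec]
  refine ⟨?_, fun v => ?_⟩
  · simp [kaczmarzMeanMatrix, IsHermitian, conjTranspose_eq_transpose_of_trivial]
  · have hquad : v ⬝ᵥ (Aᵀ * A) *ᵥ v = (A *ᵥ v) ⬝ᵥ (A *ᵥ v) := by
      rw [← mulVec_mulVec, dotProduct_mulVec, vecMul_transpose]
    rw [star_trivial, kaczmarzMeanMatrix, sub_mulVec, one_mulVec, smul_mulVec, dotProduct_sub,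
      dotProduct_smul, hquad, smul_eq_mul, sub_nonneg]
    rcases (sum_nonneg fun _ _ => sum_nonneg fun _ _ => sq_nonneg _ :
      0 ≤ ∑ i, ∑ j, A i j ^ 2).eq_or_lt with h | h
    · simpa [← h] using dotProduct_self_nonneg v
    · rw [inv_mul_le_iff₀ h]
      exact mulVec_dotProduct_self_le A v

variable {Ξ : Type*} {w : Ξ → ℝ}

theorem samplingWeight_nonneg (hw : ∀ ξ, 0 ≤ w ξ) (c : m × Ξ) : 0 ≤ samplingWeight A w c :=
  mul_nonneg (rowProb_nonneg c.1) (hw c.2)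

theorem sum_samplingWeight [Fintype Ξ] [Nonempty m] (hrow : ∀ i, ∑ j, A i j ^ 2 ≠ 0)
    (hw : ∑ ξ, w ξ = 1) :
    ∑ c, samplingWeight A w c = 1 := by
  simp [samplingWeight, Fintype.sum_prod_type, ← mul_sum, hw,
    sum_rowProb (frobeniusSq_pos hrow).ne']

theorem sum_samplingWeight_mul_kaczmarzStep_sub_dotProduct_self [Fintype Ξ] [Nonempty m]
    (hrow : ∀ i, ∑ j, A i j ^ 2 ≠ 0) (hw : ∑ ξ, w ξ = 1) (μ : m → Ξ → ℝ) (xs x : n → ℝ) :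
    ∑ c, samplingWeight A w c *
        ((kaczmarzStep A (A *ᵥ xs) c.1 (μ c.1 c.2) x - xs) ⬝ᵥ
          (kaczmarzStep A (A *ᵥ xs) c.1 (μ c.1 c.2) x - xs)) =
      (x - xs) ⬝ᵥ (x - xs) - (A *ᵥ (x - xs)) ⬝ᵥ (A *ᵥ (x - xs)) / ∑ i, ∑ j, A i j ^ 2 +
        ∑ i, rowProb A i * ∑ ξ, w ξ * μ i ξ ^ 2 := by
  have hsq : ∀ i, rowProb A i * (normalizedRow A i ⬝ᵥ (x - xs)) ^ 2 =
      (A *ᵥ (x - xs)) i ^ 2 / ∑ i, ∑ j, A i j ^ 2 := by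
    intro i
    rw [normalizedRow, smul_dotProduct, smul_eq_mul, mul_pow, ← mul_assoc,
      rowProb_mul_inv_sqrt_sq (hrow i), inv_mul_eq_div]
    rfl
  simp only [samplingWeight, Fintype.sum_prod_type, kaczmarzStep_sub,
    add_smul_dotProduct_self (normalizedRow_dotProduct_self (hrow _))]
  have hsplit : ∀ i, ∑ ξ, rowProb A i * w ξ * ((x - xs) ⬝ᵥ (x - xs) -
      (normalizedRow A i ⬝ᵥ (x - xs)) ^ 2 + μ i ξ ^ 2) =
      rowProb A i * ((x - xs) ⬝ᵥ (x - xs)) - rowProb A i * (normalizedRow A i ⬝ᵥ (x - xs)) ^ 2 +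
        rowProb A i * ∑ ξ, w ξ * μ i ξ ^ 2 := by
    intro i
    simp only [mul_assoc, ← mul_sum, mul_add, mul_sub, sum_add_distrib, sum_sub_distrib,
      ← sum_mul, hw, one_mul]
  simp only [hsplit, hsq, sum_add_distrib, sum_sub_distrib, ← sum_mul, ← sum_div,
    sum_rowProb ((frobeniusSq_pos hrow).ne'), sum_sq_eq_dotProduct_self, one_mul]

theorem sum_samplingWeight_smul_kaczmarzStep_sub [Fintype Ξ] [Nonempty m] [DecidableEq n]
    (hrow : ∀ i, ∑ j, A i j ^ 2 ≠ 0) (hw : ∑ ξ, w ξ = 1) {μ : m → Ξ → ℝ}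
    (hμ : ∀ i, ∑ ξ, w ξ * μ i ξ = 0) (xs x : n → ℝ) :
    ∑ c, samplingWeight A w c • (kaczmarzStep A (A *ᵥ xs) c.1 (μ c.1 c.2) x - xs) =
      kaczmarzMeanMatrix A *ᵥ (x - xs) := by
  have hrowSum : ∀ i (e : n → ℝ), ∑ ξ, (rowProb A i * w ξ) •
      (e + (μ i ξ - normalizedRow A i ⬝ᵥ e) • normalizedRow A i) =
      rowProb A i • e - (∑ i, ∑ j, A i j ^ 2)⁻¹ • ((A *ᵥ e) i • A i) := by
    intro i e
    have hcoef : ∑ ξ, rowProb A i * w ξ * (μ i ξ - normalizedRow A i ⬝ᵥ e) =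
        -(rowProb A i * (normalizedRow A i ⬝ᵥ e)) := by
      simp only [mul_sub, sum_sub_distrib, mul_assoc, ← mul_sum, hμ, ← sum_mul, hw]
      ring
    have hproj : (rowProb A i * (normalizedRow A i ⬝ᵥ e)) • normalizedRow A i =
        (∑ i, ∑ j, A i j ^ 2)⁻¹ • ((A *ᵥ e) i • A i) := by
      simp only [normalizedRow, smul_dotProduct, smul_smul, smul_eq_mul]
      congr 1
      rw [← rowProb_mul_inv_sqrt_sq (hrow i)]
      simp only [mulVec]
      ring
    simp only [smul_add, smul_smul, sum_add_distrib, ← sum_smul, ← mul_sum, hw, mul_one]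
    rw [hcoef, neg_smul, hproj, smul_smul, sub_eq_add_neg]
  calc ∑ c, samplingWeight A w c • (kaczmarzStep A (A *ᵥ xs) c.1 (μ c.1 c.2) x - xs)
      = ∑ i, (rowProb A i • (x - xs) - (∑ i, ∑ j, A i j ^ 2)⁻¹ • ((A *ᵥ (x - xs)) i • A i)) := by
        simp only [samplingWeight, Fintype.sum_prod_type, kaczmarzStep_sub, hrowSum]
    _ = kaczmarzMeanMatrix A *ᵥ (x - xs) := by
        rw [sum_sub_distrib, ← sum_smul, sum_rowProb (frobeniusSq_pos hrow).ne', one_smul,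
          ← smul_sum, ← vecMul_eq_sum, ← mulVec_transpose, mulVec_mulVec, kaczmarzMeanMatrix,
          sub_mulVec, one_mulVec, smul_mulVec]

theorem sum_samplingWeight_mul_kaczmarzStep_sub_dotProduct_self_le [Fintype Ξ] [Nonempty m]
    (hrow : ∀ i, ∑ j, A i j ^ 2 ≠ 0) (hw : ∑ ξ, w ξ = 1) {μ : m → Ξ → ℝ} {V : ℝ}
    (hμ : ∀ i, ∑ ξ, w ξ * μ i ξ ^ 2 ≤ V) {κ : ℝ} {xs x : n → ℝ}
    (hκ : (x - xs) ⬝ᵥ (x - xs) ≤ κ ^ 2 * (A *ᵥ (x - xs)) ⬝ᵥ (A *ᵥ (x - xs))) :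
    ∑ c, samplingWeight A w c *
        ((kaczmarzStep A (A *ᵥ xs) c.1 (μ c.1 c.2) x - xs) ⬝ᵥ
          (kaczmarzStep A (A *ᵥ xs) c.1 (μ c.1 c.2) x - xs)) ≤
      (1 - ((∑ i, ∑ j, A i j ^ 2) * κ ^ 2)⁻¹) * ((x - xs) ⬝ᵥ (x - xs)) + V := by
  have hS := frobeniusSq_pos hrow
  have hnoise : ∑ i, rowProb A i * ∑ ξ, w ξ * μ i ξ ^ 2 ≤ V :=
    calc ∑ i, rowProb A i * ∑ ξ, w ξ * μ i ξ ^ 2 ≤ ∑ i, rowProb A i * V :=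
          sum_le_sum fun i _ => mul_le_mul_of_nonneg_left (hμ i) (rowProb_nonneg i)
      _ = V := by rw [← sum_mul, sum_rowProb hS.ne', one_mul]
  have hdecay : ((∑ i, ∑ j, A i j ^ 2) * κ ^ 2)⁻¹ * ((x - xs) ⬝ᵥ (x - xs)) ≤
      (A *ᵥ (x - xs)) ⬝ᵥ (A *ᵥ (x - xs)) / ∑ i, ∑ j, A i j ^ 2 := by
    rw [mul_inv, mul_assoc, inv_mul_eq_div]
    exact div_le_div_of_nonneg_right (inv_mul_le_of_le_mul₀ (sq_nonneg κ)
      (dotProduct_self_nonneg _) hκ) hS.le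
  rw [sum_samplingWeight_mul_kaczmarzStep_sub_dotProduct_self hrow hw]
  linarith

end Kaczmarz

section KaczmarzIterates

variable {m n Ξ : Type*} [Fintype m] [Fintype n] {A : Matrix m n ℝ} {w : Ξ → ℝ}
  {xs : n → ℝ} {g : ℕ → (n → ℝ) → m → Ξ → ℝ} {T : ℕ} {x : (Fin T → m × Ξ) → ℕ → n → ℝ}
  (hinit : ∀ ω, x ω 0 = 0)
  (hstep : ∀ ω (k : Fin T), x ω (k + 1) =
    kaczmarzStep A (A *ᵥ xs) (ω k).1 (g k (x ω k) (ω k).1 (ω k).2) (x ω k))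

include hinit hstep in
theorem iterate_mem_range (ω : Fin T → m × Ξ) {k : ℕ} (hk : k ≤ T) :
    x ω k ∈ LinearMap.range A.vecMulLinear := by
  induction k with
  | zero => rw [hinit]; exact zero_mem _
  | succ k ih => rw [hstep ω ⟨k, hk⟩]; exact kaczmarzStep_mem_range _ _ _ (ih (by omega))

variable [Fintype Ξ] (hrow : ∀ i, ∑ j, A i j ^ 2 ≠ 0) (hw0 : ∀ ξ, 0 ≤ w ξ) (hw1 : ∑ ξ, w ξ = 1)
  (hmean : ∀ k v i, ∑ ξ, w ξ * g k v i ξ = 0)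

include hrow hw1 hmean hinit hstep in
theorem sum_smul_iterate_sub_eq_neg_mulVec [Nonempty m] [DecidableEq n] {k : ℕ} (hk : k ≤ T) :
    ∑ ω, (∏ j, samplingWeight A w (ω j)) • (x ω k - xs) = -(kaczmarzMeanMatrix A ^ k *ᵥ xs) := by
  induction k with
  | zero =>
    simp only [hinit, zero_sub, smul_neg, sum_neg_distrib, ← sum_smul,
      sum_prod_eq_one (sum_samplingWeight hrow hw1), one_smul, pow_zero, one_mulVec]
  | succ k ih =>
    rw [sum_prod_smul_iterate_succ (sum_samplingWeight hrow hw1)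
      (F := fun k c v => kaczmarzStep A (A *ᵥ xs) c.1 (g k v c.1 c.2) v)
      (fun ω ω' => (hinit ω).trans (hinit ω').symm) hstep ⟨k, hk⟩ (· - xs)]
    have hcond : ∀ v, ∑ c, samplingWeight A w c •
        (kaczmarzStep A (A *ᵥ xs) c.1 (g k v c.1 c.2) v - xs) = kaczmarzMeanMatrix A *ᵥ (v - xs) :=
      fun v => sum_samplingWeight_smul_kaczmarzStep_sub hrow hw1 (hmean k v) xs v
    simp only [hcond, ← mulVec_smul]
    rw [← mulVec_sum, ih (by omega), mulVec_neg, mulVec_mulVec, pow_succ']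

include hrow hw1 hmean hinit hstep in
theorem sum_mul_iterate_dotProduct_self_le [Nonempty m] [DecidableEq n] {k : ℕ} (hk : k ≤ T) :
    ∑ ω, (∏ j, samplingWeight A w (ω j)) * (x ω k ⬝ᵥ x ω k) ≤
      ∑ ω, (∏ j, samplingWeight A w (ω j)) * ((x ω k - xs) ⬝ᵥ (x ω k - xs)) + xs ⬝ᵥ xs := by
  have hexpand : ∀ ω, x ω k ⬝ᵥ x ω k =
      (x ω k - xs) ⬝ᵥ (x ω k - xs) + 2 * (xs ⬝ᵥ (x ω k - xs)) + xs ⬝ᵥ xs := by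
    intro ω
    simp only [sub_dotProduct, dotProduct_sub, dotProduct_comm xs]
    ring
  have hcross : ∑ ω, (∏ j, samplingWeight A w (ω j)) * (xs ⬝ᵥ (x ω k - xs)) =
      -(xs ⬝ᵥ (kaczmarzMeanMatrix A ^ k *ᵥ xs)) := by
    simp only [← smul_eq_mul, ← dotProduct_smul, ← dotProduct_sum,
      sum_smul_iterate_sub_eq_neg_mulVec hinit hstep hrow hw1 hmean hk, dotProduct_neg]
  have hpsd : 0 ≤ xs ⬝ᵥ (kaczmarzMeanMatrix A ^ k *ᵥ xs) := by
    simpa using (posSemidef_kaczmarzMeanMatrix.pow k).dotProduct_mulVec_nonneg xs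
  simp only [hexpand, mul_add, sum_add_distrib, mul_left_comm _ (2 : ℝ), ← mul_sum, hcross,
    ← sum_mul, sum_prod_eq_one (sum_samplingWeight hrow hw1), one_mul]
  linarith

include hrow hw0 hw1 hmean hinit hstep in
theorem sum_mul_iterate_succ_sub_dotProduct_self_le [Nonempty m] [DecidableEq n] {δ κ : ℝ}
    (hδ : 0 ≤ δ) (hvar : ∀ k v i, ∑ ξ, w ξ * g k v i ξ ^ 2 ≤ δ * (v ⬝ᵥ v))
    (hκ : ∀ v ∈ LinearMap.range A.vecMulLinear, v ⬝ᵥ v ≤ κ ^ 2 * (A *ᵥ v) ⬝ᵥ (A *ᵥ v))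
    (hxs : xs ∈ LinearMap.range A.vecMulLinear) {k : ℕ} (hk : k < T) :
    ∑ ω, (∏ j, samplingWeight A w (ω j)) * ((x ω (k + 1) - xs) ⬝ᵥ (x ω (k + 1) - xs)) ≤
      (1 - ((∑ i, ∑ j, A i j ^ 2) * κ ^ 2)⁻¹ + δ) *
        ∑ ω, (∏ j, samplingWeight A w (ω j)) * ((x ω k - xs) ⬝ᵥ (x ω k - xs)) +
      δ * (xs ⬝ᵥ xs) := by
  have hmarkov := sum_prod_smul_iterate_succ (sum_samplingWeight hrow hw1)
    (F := fun k c v => kaczmarzStep A (A *ᵥ xs) c.1 (g k v c.1 c.2) v)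
    (fun ω ω' => (hinit ω).trans (hinit ω').symm) hstep ⟨k, hk⟩ (fun v => (v - xs) ⬝ᵥ (v - xs))
  simp only [smul_eq_mul] at hmarkov
  have hnorm := sum_mul_iterate_dotProduct_self_le hinit hstep hrow hw1 hmean hk.le
  rw [hmarkov]
  calc _ ≤ ∑ ω, (∏ j, samplingWeight A w (ω j)) *
          ((1 - ((∑ i, ∑ j, A i j ^ 2) * κ ^ 2)⁻¹) * ((x ω k - xs) ⬝ᵥ (x ω k - xs)) +
            δ * (x ω k ⬝ᵥ x ω k)) := by
        refine sum_le_sum fun ω _ => mul_le_mul_of_nonneg_left ?_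
          (prod_nonneg fun j _ => samplingWeight_nonneg hw0 (ω j))
        exact sum_samplingWeight_mul_kaczmarzStep_sub_dotProduct_self_le hrow hw1 (hvar k (x ω k))
          (hκ _ (sub_mem (iterate_mem_range hinit hstep ω hk.le) hxs))
    _ = (1 - ((∑ i, ∑ j, A i j ^ 2) * κ ^ 2)⁻¹) *
          ∑ ω, (∏ j, samplingWeight A w (ω j)) * ((x ω k - xs) ⬝ᵥ (x ω k - xs)) +
        δ * ∑ ω, (∏ j, samplingWeight A w (ω j)) * (x ω k ⬝ᵥ x ω k) := by
        simp only [mul_add, sum_add_distrib, mul_sum]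
        congr 1 <;> exact sum_congr rfl fun _ _ => by ring
    _ ≤ _ := by nlinarith

end KaczmarzIterates

theorem stmt7_general (m n T : ℕ) (A : Matrix (Fin m) (Fin n) ℝ)
    (hrow : ∀ i, (∑ j, A i j ^ 2) ≠ 0)
    (cinv : ℝ)
    (hcinv : ∀ w : Fin n → ℝ, (∃ y : Fin m → ℝ, w = Matrix.vecMul y A) →
      (∑ j, w j ^ 2) ≤ cinv ^ 2 * ∑ i, (A.mulVec w i) ^ 2)
    (ε : ℝ) (hε0 : 0 < ε) (hε1 : ε < 1)
    (hT : (T : ℝ) = (∑ i, ∑ j, A i j ^ 2) * cinv ^ 2 * Real.log (2 / ε ^ 2))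
    (b : Fin m → ℝ) (xstar : Fin n → ℝ)
    (hb : A.mulVec xstar = b)
    (hxstar : ∃ y : Fin m → ℝ, xstar = Matrix.vecMul y A)
    -- the perturbation distribution
    (Ξ : Type) [Fintype Ξ] (w : Ξ → ℝ) (hw0 : ∀ ξ, 0 ≤ w ξ) (hw1 : ∑ ξ, w ξ = 1)
    (g : ℕ → (Fin n → ℝ) → Fin m → Ξ → ℝ)
    (hmean : ∀ k v i, ∑ ξ, w ξ * g k v i ξ = 0)
    (hvar : ∀ k v i, ∑ ξ, w ξ * (g k v i ξ) ^ 2 ≤ ε ^ 2 / (4 * T) * ∑ j, v j ^ 2)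
    -- the random iterates, over the sample space of T i.i.d. draws of (row index, ξ)
    (x : (Fin T → Fin m × Ξ) → ℕ → Fin n → ℝ)
    (hinit : ∀ ω, x ω 0 = 0)
    (hstep : ∀ (ω : Fin T → Fin m × Ξ) (k : Fin T),
      x ω (k.1 + 1) = fun j => x ω k.1 j +
        ((b ((ω k).1) / Real.sqrt (∑ l, A ((ω k).1) l ^ 2)
            - ∑ l, A ((ω k).1) l / Real.sqrt (∑ l', A ((ω k).1) l' ^ 2) * x ω k.1 l)
          + g k.1 (x ω k.1) ((ω k).1) ((ω k).2))
          * (A ((ω k).1) j / Real.sqrt (∑ l, A ((ω k).1) l ^ 2))) :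
    ∑ ω : Fin T → Fin m × Ξ,
        (∏ k, ((∑ j, A ((ω k).1) j ^ 2) / (∑ i, ∑ j, A i j ^ 2)) * w ((ω k).2)) *
        (∑ j, (x ω T j - xstar j) ^ 2)
      ≤ ε ^ 2 * ∑ j, xstar j ^ 2 := by
  subst hb
  have hxs : xstar ∈ LinearMap.range A.vecMulLinear := hxstar.imp fun y hy => hy.symm
  rcases Nat.eq_zero_or_pos m with rfl | hm
  · obtain ⟨y, rfl⟩ := hxstar
    obtain rfl : T = 0 := by exact_mod_cast (by simpa using hT : (T : ℝ) = 0)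
    simp [hinit]
  have : Nonempty (Fin m) := ⟨⟨0, hm⟩⟩
  have hκ : ∀ v ∈ LinearMap.range A.vecMulLinear,
      v ⬝ᵥ v ≤ cinv ^ 2 * (A *ᵥ v) ⬝ᵥ (A *ᵥ v) := fun v ⟨y, hy⟩ => by
    simpa only [sum_sq_eq_dotProduct_self] using hcinv v ⟨y, hy.symm⟩
  have hvar' : ∀ k v i, ∑ ξ, w ξ * g k v i ξ ^ 2 ≤ ε ^ 2 / (4 * T) * (v ⬝ᵥ v) := by
    simpa only [sum_sq_eq_dotProduct_self] using hvar
  have hP : ∑ ω : Fin T → Fin m × Ξ, ∏ j, samplingWeight A w (ω j) = 1 :=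
    sum_prod_eq_one (sum_samplingWeight hrow hw1)
  have hfinal := le_sq_mul_of_le_mul_add
    (u := fun k => ∑ ω, (∏ j, samplingWeight A w (ω j)) * ((x ω k - xstar) ⬝ᵥ (x ω k - xstar)))
    (one_le_frobeniusSq_mul_sq hrow hκ) hε0 hε1 hT (dotProduct_self_nonneg xstar)
    (by simp [hinit, ← sum_mul, hP]) fun k hk =>
      sum_mul_iterate_succ_sub_dotProduct_self_le hinit hstep hrow hw0 hw1 hmean (by positivity)
        hvar' hκ hxs hk
  simp only [← sum_sq_eq_dotProduct_self, Pi.sub_apply] at hfinal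
  exact hfinal

/-- Perturbed randomized Kaczmarz convergence.  Consider the iteration
`x_{k+1} = x_k + (b̃_{r_k} − ⟨Ã_{r_k*}, x_k⟩) Ã_{r_k*} + μ_k Ã_{r_k*}`, where
`Ã_{r*} = A_{r*}/‖A_{r*}‖`, `b̃_r = b_r/‖A_{r*}‖`, the index `r_k` is sampled with
probability `‖A_{r*}‖²/‖A‖_F²`, and the perturbation `μ_k = g k x_k r_k ξ_k`
(with `ξ_k` drawn independently from a finite distribution `(Ξ, w)`) has conditional
mean `0` and conditional variance at most `(ε²/(4T))‖x_k‖²`, for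
`T = κ_F² log(2/ε²)`.  Then, starting from `x_0 = 0`, after `T` iterations
`E[‖x_T − x_*‖²] ≤ ε² ‖x_*‖²` (assuming `A x_* = b` and `x_*` in the row space of `A`).
Here `cinv` stands for `‖A⁻¹‖` and the sample space is `Fin T → Fin m × Ξ`. -/
theorem stmt7 (m n T : ℕ) (A : Matrix (Fin m) (Fin n) ℝ)
    (hrow : ∀ i, (∑ j, A i j ^ 2) ≠ 0)
    (cinv : ℝ) (hcinv0 : 0 < cinv)
    (hcinv : ∀ w : Fin n → ℝ, (∃ y : Fin m → ℝ, w = Matrix.vecMul y A) →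
      (∑ j, w j ^ 2) ≤ cinv ^ 2 * ∑ i, (A.mulVec w i) ^ 2)
    (ε : ℝ) (hε0 : 0 < ε) (hε1 : ε < 1)
    (hT : (T : ℝ) = (∑ i, ∑ j, A i j ^ 2) * cinv ^ 2 * Real.log (2 / ε ^ 2))
    (b : Fin m → ℝ) (xstar : Fin n → ℝ)
    (hb : A.mulVec xstar = b)
    (hxstar : ∃ y : Fin m → ℝ, xstar = Matrix.vecMul y A)
    -- the perturbation distribution
    (Ξ : Type) [Fintype Ξ] (w : Ξ → ℝ) (hw0 : ∀ ξ, 0 ≤ w ξ) (hw1 : ∑ ξ, w ξ = 1)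
    (g : ℕ → (Fin n → ℝ) → Fin m → Ξ → ℝ)
    (hmean : ∀ k v i, ∑ ξ, w ξ * g k v i ξ = 0)
    (hvar : ∀ k v i, ∑ ξ, w ξ * (g k v i ξ) ^ 2 ≤ ε ^ 2 / (4 * T) * ∑ j, v j ^ 2)
    -- the random iterates, over the sample space of T i.i.d. draws of (row index, ξ)
    (x : (Fin T → Fin m × Ξ) → ℕ → Fin n → ℝ)
    (hinit : ∀ ω, x ω 0 = 0)
    (hstep : ∀ (ω : Fin T → Fin m × Ξ) (k : Fin T),
      x ω (k.1 + 1) = fun j => x ω k.1 j +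
        ((b ((ω k).1) / Real.sqrt (∑ l, A ((ω k).1) l ^ 2)
            - ∑ l, A ((ω k).1) l / Real.sqrt (∑ l', A ((ω k).1) l' ^ 2) * x ω k.1 l)
          + g k.1 (x ω k.1) ((ω k).1) ((ω k).2))
          * (A ((ω k).1) j / Real.sqrt (∑ l, A ((ω k).1) l ^ 2))) :
    ∑ ω : Fin T → Fin m × Ξ,
        (∏ k, ((∑ j, A ((ω k).1) j ^ 2) / (∑ i, ∑ j, A i j ^ 2)) * w ((ω k).2)) *
        (∑ j, (x ω T j - xstar j) ^ 2)
      ≤ ε ^ 2 * ∑ j, xstar j ^ 2 :=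
  stmt7_general m n T A hrow cinv hcinv ε hε0 hε1 hT b xstar hb hxstar Ξ w hw0 hw1 g hmean hvar x
    hinit hstep
end

section
/- Let q be a positive integer and P a symmetric matrix with 0 ⪯ P ⪯ I (e.g. P = A^T A / ‖A‖_F²). If T is a multiset of q indices sampled i.i.d. and M = I − (1/2) Σ_{i∈T} |ã_i⟩⟨ã_i| where each unit vector ã_i is a row of A normalized, sampled with probability ‖A_{i*}‖²/‖A‖_F², then E[M²] = I − (3q/4)·A^T A/‖A‖_F² + ((q² − q)/4)·(A^T A/‖A‖_F²)², and if q = ‖A‖_F²/‖A‖² then restricted to the row space of A, E[M²] ⪯ (1 − 1/(2κ²)) I, where κ = ‖A‖‖A⁻¹‖. -/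
/-!
With `S = ∑ₛ |ã_{tₛ}⟩⟨ã_{tₛ}|` we have `M² = 1 - S + S²/4`. Under i.i.d. sampling,
`E S = q P` and `E S² = q E[Q²] + (q² - q) P²`, where `Q = |ã⟩⟨ã|` is idempotent, so
`E[Q²] = E Q = P`; this gives the formula for `E M²`.

For the bound, `P² ⪯ ‖P‖ P = P / q` (because `‖AᵀA‖ = ‖A‖²`), hence
`E M² ⪯ 1 - (q/2 + 1/4) P ⪯ 1 - (q/2) P`, and on the row space
`(q/2) vᵀ P v = ‖Av‖² / (2‖A‖²) ≥ ‖v‖² / (2κ²)`.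
-/

open Matrix

theorem sum_fin_succ_fun {ι M : Type*} [Fintype ι] [AddCommMonoid M] {q : ℕ}
    (g : (Fin (q + 1) → ι) → M) :
    ∑ t, g t = ∑ x, ∑ t : Fin q → ι, g (Fin.cons x t) := by
  rw [← (Fin.consEquiv fun _ => ι).sum_comp, Fintype.sum_prod_type]
  rfl

section IIDExpect

variable {ι R : Type*} [Fintype ι] (w : ι → ℝ)

def iidExpect [AddCommMonoid R] [Module ℝ R] (q : ℕ) (g : (Fin q → ι) → R) : R :=
  ∑ t, (∏ s, w (t s)) • g t

section Module

variable [AddCommGroup R] [Module ℝ R] {q : ℕ}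

theorem iidExpect_succ (g : (Fin (q + 1) → ι) → R) :
    iidExpect w (q + 1) g = ∑ x, w x • iidExpect w q (fun t => g (Fin.cons x t)) := by
  simp only [iidExpect, sum_fin_succ_fun, Fin.prod_univ_succ, Fin.cons_zero, Fin.cons_succ,
    Finset.smul_sum, mul_smul]

theorem iidExpect_add (g h : (Fin q → ι) → R) :
    iidExpect w q (fun t => g t + h t) = iidExpect w q g + iidExpect w q h := by
  simp only [iidExpect, smul_add, Finset.sum_add_distrib]

theorem iidExpect_smul (c : ℝ) (g : (Fin q → ι) → R) :
    iidExpect w q (fun t => c • g t) = c • iidExpect w q g := by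
  simp only [iidExpect, Finset.smul_sum, smul_comm c]

theorem iidExpect_const (hw : ∑ i, w i = 1) (c : R) : iidExpect w q (fun _ => c) = c := by
  rw [iidExpect, ← Finset.sum_smul, ← Fintype.sum_pow, hw, one_pow, one_smul]

theorem iidExpect_sum (hw : ∑ i, w i = 1) (f : ι → R) :
    iidExpect w q (fun t => ∑ s, f (t s)) = (q : ℝ) • ∑ i, w i • f i := by
  induction q with
  | zero => simp [iidExpect]
  | succ q ih =>
    simp only [iidExpect_succ, Fin.sum_univ_succ, Fin.cons_zero, Fin.cons_succ,
      iidExpect_add, iidExpect_const w hw, ih, smul_add, Finset.sum_add_distrib,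
      ← Finset.sum_smul, hw, one_smul]
    push_cast
    module

end Module

section Algebra

variable [Ring R] [Algebra ℝ R] {q : ℕ}

theorem iidExpect_mul_left (a : R) (g : (Fin q → ι) → R) :
    iidExpect w q (fun t => a * g t) = a * iidExpect w q g := by
  simp only [iidExpect, Finset.mul_sum, mul_smul_comm]

theorem iidExpect_mul_right (a : R) (g : (Fin q → ι) → R) :
    iidExpect w q (fun t => g t * a) = iidExpect w q g * a := by
  simp only [iidExpect, Finset.sum_mul, smul_mul_assoc]

theorem iidExpect_sum_mul_sum (hw : ∑ i, w i = 1) (f : ι → R) :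
    iidExpect w q (fun t => (∑ s, f (t s)) * ∑ s, f (t s))
      = (q : ℝ) • ∑ i, w i • (f i * f i)
        + ((q : ℝ) ^ 2 - q) • ((∑ i, w i • f i) * ∑ i, w i • f i) := by
  induction q with
  | zero => simp [iidExpect]
  | succ q ih =>
    set B := ∑ i, w i • f i with hB
    have sum_mul_left (X : R) : ∑ x, w x • (f x * X) = B * X := by
      simp only [B, Finset.sum_mul, smul_mul_assoc]
    have sum_mul_right (X : R) : ∑ x, w x • (X * f x) = X * B := by
      simp only [B, Finset.mul_sum, mul_smul_comm]
    simp only [iidExpect_succ, Fin.sum_univ_succ, Fin.cons_zero, Fin.cons_succ, add_mul,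
      mul_add, iidExpect_add, iidExpect_const w hw, iidExpect_mul_left, iidExpect_mul_right,
      iidExpect_sum w hw, ih, smul_add, Finset.sum_add_distrib, sum_mul_left, sum_mul_right,
      ← Finset.sum_smul, hw, one_smul, ← hB]
    rw [smul_mul_assoc, mul_smul_comm]
    push_cast
    module

theorem iidExpect_one_sub_half_smul_sum_sq (hw : ∑ i, w i = 1) (f : ι → R)
    (hf : ∀ i, IsIdempotentElem (f i)) :
    iidExpect w q (fun t => (1 - (1 / 2 : ℝ) • ∑ s, f (t s)) * (1 - (1 / 2 : ℝ) • ∑ s, f (t s)))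
      = 1 - (3 * q / 4 : ℝ) • ∑ i, w i • f i
        + (((q : ℝ) ^ 2 - q) / 4) • ((∑ i, w i • f i) * ∑ i, w i • f i) := by
  have expand (S : R) : (1 - (1 / 2 : ℝ) • S) * (1 - (1 / 2 : ℝ) • S)
      = 1 + (-1 : ℝ) • S + (1 / 4 : ℝ) • (S * S) := by
    simp only [sub_mul, mul_sub, one_mul, mul_one, smul_mul_assoc, mul_smul_comm]
    module
  simp only [expand, iidExpect_add, iidExpect_smul, iidExpect_const w hw, iidExpect_sum w hw,
    iidExpect_sum_mul_sum w hw, fun i => (hf i).eq]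
  module

end Algebra

end IIDExpect

theorem transpose_mul_self_eq_sum_vecMulVec {m n α : Type*} [Fintype m]
    [NonUnitalNonAssocSemiring α] (A : Matrix m n α) :
    Aᵀ * A = ∑ i, vecMulVec (A i) (A i) := by
  ext j k
  simp only [mul_apply, transpose_apply, Matrix.sum_apply, vecMulVec_apply]

theorem sum_sq_eq_dotProduct_self_s12 {n α : Type*} [Fintype n] [Semiring α] (a : n → α) :
    ∑ j, a j ^ 2 = a ⬝ᵥ a := by
  simp only [dotProduct, sq]

section RankOne

variable {n : Type*} [Fintype n]

theorem dotProduct_self_mul_inv_sqrt_mul_inv_sqrt {a : n → ℝ} (ha : a ≠ 0) :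
    (a ⬝ᵥ a) * ((√(a ⬝ᵥ a))⁻¹ * (√(a ⬝ᵥ a))⁻¹) = 1 := by
  have hpos : 0 < a ⬝ᵥ a := by
    simpa using (dotProduct_self_star_pos_iff (v := a)).2 ha
  rw [← mul_inv, Real.mul_self_sqrt hpos.le, mul_inv_cancel₀ hpos.ne']

theorem isIdempotentElem_vecMulVec_inv_sqrt_smul (a : n → ℝ) :
    IsIdempotentElem (vecMulVec ((√(a ⬝ᵥ a))⁻¹ • a) ((√(a ⬝ᵥ a))⁻¹ • a)) := by
  rcases eq_or_ne a 0 with rfl | ha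
  · -- the junk value `(√0)⁻¹ = 0` makes the normalised vector `0`
    simp [IsIdempotentElem]
  have unit : ((√(a ⬝ᵥ a))⁻¹ • a) ⬝ᵥ ((√(a ⬝ᵥ a))⁻¹ • a) = 1 := by
    rw [dotProduct_smul, smul_dotProduct, smul_eq_mul, smul_eq_mul,
      ← dotProduct_self_mul_inv_sqrt_mul_inv_sqrt ha]
    ring
  rw [IsIdempotentElem, vecMulVec_mul_vecMulVec, unit, one_smul]

theorem dotProduct_self_smul_vecMulVec_inv_sqrt_smul (a : n → ℝ) :
    (a ⬝ᵥ a) • vecMulVec ((√(a ⬝ᵥ a))⁻¹ • a) ((√(a ⬝ᵥ a))⁻¹ • a) = vecMulVec a a := by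
  rcases eq_or_ne a 0 with rfl | ha
  · simp
  rw [smul_vecMulVec, vecMulVec_smul, smul_smul, smul_smul, mul_assoc,
    dotProduct_self_mul_inv_sqrt_mul_inv_sqrt ha, one_smul]

end RankOne

section Spectral

variable {m n : Type*} [Fintype m] [Fintype n]

theorem dotProduct_mulVec_transpose_mul_self {α : Type*} [CommSemiring α] (B : Matrix m n α)
    (v : n → α) :
    v ⬝ᵥ ((Bᵀ * B) *ᵥ v) = (B *ᵥ v) ⬝ᵥ (B *ᵥ v) := by
  rw [← mulVec_mulVec, dotProduct_mulVec, vecMul_transpose]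

theorem dotProduct_sq_le_dotProduct_self_mul {α : Type*} [CommRing α] [LinearOrder α]
    [IsStrictOrderedRing α] (x y : n → α) :
    (x ⬝ᵥ y) ^ 2 ≤ (x ⬝ᵥ x) * (y ⬝ᵥ y) := by
  simpa only [dotProduct, sq] using Finset.sum_mul_sq_le_sq_mul_sq Finset.univ x y

variable {A : Matrix m n ℝ} {s : ℝ}

theorem transpose_mulVec_dotProduct_self_le
    (hs : ∀ v, (A *ᵥ v) ⬝ᵥ (A *ᵥ v) ≤ s ^ 2 * (v ⬝ᵥ v)) (y : m → ℝ) :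
    (Aᵀ *ᵥ y) ⬝ᵥ (Aᵀ *ᵥ y) ≤ s ^ 2 * (y ⬝ᵥ y) := by
  set u := Aᵀ *ᵥ y
  have hu : u ⬝ᵥ u = y ⬝ᵥ (A *ᵥ u) := by
    rw [dotProduct_mulVec, ← mulVec_transpose, transpose_transpose, dotProduct_comm]
  have hu0 : 0 ≤ u ⬝ᵥ u := by simpa using dotProduct_self_star_nonneg u
  have hy0 : 0 ≤ y ⬝ᵥ y := by simpa using dotProduct_self_star_nonneg y
  rcases hu0.eq_or_lt with hzero | hpos
  · rw [← hzero]
    positivity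
  refine le_of_mul_le_mul_right ?_ hpos
  calc (u ⬝ᵥ u) * (u ⬝ᵥ u) = (y ⬝ᵥ (A *ᵥ u)) ^ 2 := by rw [hu, sq]
    _ ≤ (y ⬝ᵥ y) * ((A *ᵥ u) ⬝ᵥ (A *ᵥ u)) := dotProduct_sq_le_dotProduct_self_mul _ _
    _ ≤ (y ⬝ᵥ y) * (s ^ 2 * (u ⬝ᵥ u)) := by gcongr; exact hs u
    _ = s ^ 2 * (y ⬝ᵥ y) * (u ⬝ᵥ u) := by ring

theorem dotProduct_sq_mulVec_le
    (hs : ∀ v, (A *ᵥ v) ⬝ᵥ (A *ᵥ v) ≤ s ^ 2 * (v ⬝ᵥ v)) (v : n → ℝ) :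
    v ⬝ᵥ (((Aᵀ * A) * (Aᵀ * A)) *ᵥ v) ≤ s ^ 2 * (v ⬝ᵥ ((Aᵀ * A) *ᵥ v)) := by
  have hsymm : (Aᵀ * A) * (Aᵀ * A) = (Aᵀ * A)ᵀ * (Aᵀ * A) := by
    rw [transpose_mul, transpose_transpose]
  rw [hsymm, dotProduct_mulVec_transpose_mul_self, dotProduct_mulVec_transpose_mul_self,
    ← mulVec_mulVec]
  exact transpose_mulVec_dotProduct_self_le hs _

theorem dotProduct_one_sub_smul_add_smul_mul_self_mulVec_le [DecidableEq n]
    (hs : ∀ v, (A *ᵥ v) ⬝ᵥ (A *ᵥ v) ≤ s ^ 2 * (v ⬝ᵥ v)) (hs0 : 0 < s) {F : ℝ} (hF : F ≠ 0)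
    {q : ℕ} (hq : (q : ℝ) = F / s ^ 2) (v : n → ℝ) :
    v ⬝ᵥ ((1 - (3 * q / 4 : ℝ) • (F⁻¹ • (Aᵀ * A))
        + (((q : ℝ) ^ 2 - q) / 4) • ((F⁻¹ • (Aᵀ * A)) * (F⁻¹ • (Aᵀ * A)))) *ᵥ v)
      ≤ v ⬝ᵥ v - (A *ᵥ v) ⬝ᵥ (A *ᵥ v) / (2 * s ^ 2) := by
  set P := F⁻¹ • (Aᵀ * A)
  have hq0 : (q : ℝ) ≠ 0 := by rw [hq]; positivity
  have hq1 : (1 : ℝ) ≤ q := by exact_mod_cast Nat.one_le_iff_ne_zero.2 (by exact_mod_cast hq0)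
  have hFpos : 0 < F := by
    have hFq : F = q * s ^ 2 := by rw [hq]; field_simp
    rw [hFq]
    positivity
  set W := (A *ᵥ v) ⬝ᵥ (A *ᵥ v)
  have hW : 0 ≤ W := by simpa using dotProduct_self_star_nonneg (A *ᵥ v)
  have hPv : v ⬝ᵥ (P *ᵥ v) = W / F := by
    rw [smul_mulVec, dotProduct_smul, dotProduct_mulVec_transpose_mul_self, smul_eq_mul,
      inv_mul_eq_div]
  have hP2v : v ⬝ᵥ ((P * P) *ᵥ v) ≤ v ⬝ᵥ (P *ᵥ v) / q := by
    have hsq := dotProduct_sq_mulVec_le hs v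
    rw [dotProduct_mulVec_transpose_mul_self] at hsq
    simp only [P, smul_mul_smul, smul_mulVec, dotProduct_smul, smul_eq_mul,
      dotProduct_mulVec_transpose_mul_self, hq]
    calc (F⁻¹ * F⁻¹) * (v ⬝ᵥ (Aᵀ * A * (Aᵀ * A)) *ᵥ v) ≤ (F⁻¹ * F⁻¹) * (s ^ 2 * W) := by
          gcongr
      _ = F⁻¹ * W / (F / s ^ 2) := by field_simp
  calc v ⬝ᵥ ((1 - (3 * q / 4 : ℝ) • P + (((q : ℝ) ^ 2 - q) / 4) • (P * P)) *ᵥ v)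
      = v ⬝ᵥ v - (3 * q / 4) * (v ⬝ᵥ (P *ᵥ v))
        + (((q : ℝ) ^ 2 - q) / 4) * (v ⬝ᵥ ((P * P) *ᵥ v)) := by
        simp only [add_mulVec, sub_mulVec, smul_mulVec, one_mulVec, dotProduct_add,
          dotProduct_sub, dotProduct_smul, smul_eq_mul]
    _ ≤ v ⬝ᵥ v - (3 * q / 4) * (W / F) + (((q : ℝ) ^ 2 - q) / 4) * (W / F / q) := by
        rw [← hPv]
        gcongr
        nlinarith
    _ = v ⬝ᵥ v - (q / 2) * (W / F) - (W / F) / 4 := by field_simp; ring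
    _ ≤ v ⬝ᵥ v - (q / 2) * (W / F) := by linarith [div_nonneg hW hFpos.le]
    _ = v ⬝ᵥ v - W / (2 * s ^ 2) := by rw [hq]; field_simp

end Spectral

theorem sub_div_two_mul_sq_le_one_sub_div_mul {x y s c : ℝ} (hy : 0 ≤ y) (hxy : x ≤ c ^ 2 * y) :
    x - y / (2 * s ^ 2) ≤ (1 - 1 / (2 * (s * c) ^ 2)) * x := by
  have hquot : x / (2 * (s * c) ^ 2) ≤ y / (2 * s ^ 2) :=
    calc x / (2 * (s * c) ^ 2) = x / c ^ 2 / (2 * s ^ 2) := by rw [div_div, mul_pow]; ring_nf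
      _ ≤ y / (2 * s ^ 2) := by gcongr; exact div_le_of_le_mul₀ (sq_nonneg _) hy (by linarith)
  rw [sub_mul, one_mul, one_div_mul_eq_div]
  linarith

theorem sum_sum_sq_ne_zero {m n : Type*} [Fintype m] [Fintype n] {A : Matrix m n ℝ}
    (hA : A ≠ 0) : ∑ i, ∑ j, A i j ^ 2 ≠ 0 := by
  contrapose! hA
  ext i j
  rw [Fintype.sum_eq_zero_iff_of_nonneg fun i => by positivity] at hA
  have hi := congr_fun hA i
  rw [Pi.zero_apply, Fintype.sum_eq_zero_iff_of_nonneg fun j => by positivity] at hi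
  exact pow_eq_zero_iff two_ne_zero |>.1 (congr_fun hi j)

theorem stmt12_general (m n q : ℕ)
    (A : Matrix (Fin m) (Fin n) ℝ) (hA : A ≠ 0)
    (snorm : ℝ) (hsn0 : 0 < snorm)
    (hsn1 : ∀ v : Fin n → ℝ, (∑ i, (A.mulVec v i) ^ 2) ≤ snorm ^ 2 * ∑ j, v j ^ 2)
    (cinv : ℝ)
    (hcinv : ∀ w : Fin n → ℝ, (∃ y : Fin m → ℝ, w = Matrix.vecMul y A) →
      (∑ j, w j ^ 2) ≤ cinv ^ 2 * ∑ i, (A.mulVec w i) ^ 2)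
    (atil : Fin m → Fin n → ℝ)
    (hatil : ∀ i j, atil i j = A i j / Real.sqrt (∑ l, A i l ^ 2))
    (M : (Fin q → Fin m) → Matrix (Fin n) (Fin n) ℝ)
    (hM : ∀ t, M t = (1 : Matrix (Fin n) (Fin n) ℝ) -
      (1 / 2 : ℝ) • ∑ s, Matrix.vecMulVec (atil (t s)) (atil (t s)))
    (P : Matrix (Fin n) (Fin n) ℝ)
    (hP : P = ((∑ i, ∑ j, A i j ^ 2)⁻¹) • (A.transpose * A)) :
    (∑ t : Fin q → Fin m,
        (∏ s, (∑ j, A (t s) j ^ 2) / (∑ i, ∑ j, A i j ^ 2)) • (M t * M t)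
      = (1 : Matrix (Fin n) (Fin n) ℝ) - ((3 * q : ℝ) / 4) • P
          + (((q : ℝ) ^ 2 - q) / 4) • (P * P)) ∧
    ((q : ℝ) = (∑ i, ∑ j, A i j ^ 2) / snorm ^ 2 →
      ∀ v : Fin n → ℝ, (∃ y : Fin m → ℝ, v = Matrix.vecMul y A) →
        v ⬝ᵥ (∑ t : Fin q → Fin m,
            (∏ s, (∑ j, A (t s) j ^ 2) / (∑ i, ∑ j, A i j ^ 2)) • (M t * M t)).mulVec v
          ≤ (1 - 1 / (2 * (snorm * cinv) ^ 2)) * ∑ j, v j ^ 2) := by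
  set F := ∑ i, ∑ j, A i j ^ 2
  have hF : F ≠ 0 := sum_sum_sq_ne_zero hA
  set w : Fin m → ℝ := fun i => (∑ j, A i j ^ 2) / F
  have hw : ∑ i, w i = 1 := by rw [← Finset.sum_div, div_self hF]
  have hatil_eq (i : Fin m) : atil i = (√(A i ⬝ᵥ A i))⁻¹ • A i := by
    ext j
    rw [hatil, ← sum_sq_eq_dotProduct_self_s12, Pi.smul_apply, smul_eq_mul, div_eq_inv_mul]
  have hPw : ∑ i, w i • vecMulVec (atil i) (atil i) = P := by
    simp only [hP, transpose_mul_self_eq_sum_vecMulVec, Finset.smul_sum, w, hatil_eq,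
      sum_sq_eq_dotProduct_self_s12, div_eq_inv_mul, mul_smul,
      dotProduct_self_smul_vecMulVec_inv_sqrt_smul]
  have hmoment := iidExpect_one_sub_half_smul_sum_sq w (q := q) hw
    (fun i => vecMulVec (atil i) (atil i))
    (fun i => hatil_eq i ▸ isIdempotentElem_vecMulVec_inv_sqrt_smul (A i))
  simp only [← hM, hPw] at hmoment
  refine ⟨hmoment, fun hq v hv => ?_⟩
  have hsn (x : Fin n → ℝ) : (A *ᵥ x) ⬝ᵥ (A *ᵥ x) ≤ snorm ^ 2 * (x ⬝ᵥ x) := by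
    simpa only [sum_sq_eq_dotProduct_self_s12] using hsn1 x
  have hlow : v ⬝ᵥ v ≤ cinv ^ 2 * ((A *ᵥ v) ⬝ᵥ (A *ᵥ v)) := by
    simpa only [sum_sq_eq_dotProduct_self_s12] using hcinv v hv
  have hW : 0 ≤ (A *ᵥ v) ⬝ᵥ (A *ᵥ v) := by simpa using dotProduct_self_star_nonneg (A *ᵥ v)
  unfold iidExpect at hmoment
  rw [hmoment, hP, sum_sq_eq_dotProduct_self_s12]
  exact (dotProduct_one_sub_smul_add_smul_mul_self_mulVec_le hsn hsn0 hF hq v).trans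
    (sub_div_two_mul_sq_le_one_sub_div_mul hW hlow)

/-- Let `q > 0` and sample a multiset `t : Fin q → Fin m` of row indices
i.i.d. with `Pr[i] = ‖A_{i*}‖²/‖A‖_F²`, and let
`M t = I − (1/2) ∑_{s<q} |ã_{t s}⟩⟨ã_{t s}|` where `ã_i = A_{i*}/‖A_{i*}‖`.  Then with
`P = Aᵀ A/‖A‖_F²` (so that `0 ⪯ P ⪯ I`),
`E[M²] = I − (3q/4) P + ((q² − q)/4) P²`, and if `q = ‖A‖_F²/‖A‖²` then, restricted to
the row space of `A`, `E[M²] ⪯ (1 − 1/(2κ²)) I` where `κ = ‖A‖ ‖A⁻¹‖`.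
Here `snorm` is the spectral norm `‖A‖` (Rayleigh characterization) and `cinv`
stands for `‖A⁻¹‖` (characterized on the row space). -/
theorem stmt12 (m n q : ℕ) (hq0 : 0 < q)
    (A : Matrix (Fin m) (Fin n) ℝ) (hA : A ≠ 0)
    (hrow : ∀ i, (∑ j, A i j ^ 2) ≠ 0)
    (snorm : ℝ) (hsn0 : 0 < snorm)
    (hsn1 : ∀ v : Fin n → ℝ, (∑ i, (A.mulVec v i) ^ 2) ≤ snorm ^ 2 * ∑ j, v j ^ 2)
    (hsn2 : ∃ v : Fin n → ℝ, v ≠ 0 ∧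
      (∑ i, (A.mulVec v i) ^ 2) = snorm ^ 2 * ∑ j, v j ^ 2)
    (cinv : ℝ) (hcinv0 : 0 < cinv)
    (hcinv : ∀ w : Fin n → ℝ, (∃ y : Fin m → ℝ, w = Matrix.vecMul y A) →
      (∑ j, w j ^ 2) ≤ cinv ^ 2 * ∑ i, (A.mulVec w i) ^ 2)
    (atil : Fin m → Fin n → ℝ)
    (hatil : ∀ i j, atil i j = A i j / Real.sqrt (∑ l, A i l ^ 2))
    (M : (Fin q → Fin m) → Matrix (Fin n) (Fin n) ℝ)
    (hM : ∀ t, M t = (1 : Matrix (Fin n) (Fin n) ℝ) -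
      (1 / 2 : ℝ) • ∑ s, Matrix.vecMulVec (atil (t s)) (atil (t s)))
    (P : Matrix (Fin n) (Fin n) ℝ)
    (hP : P = ((∑ i, ∑ j, A i j ^ 2)⁻¹) • (A.transpose * A)) :
    (∑ t : Fin q → Fin m,
        (∏ s, (∑ j, A (t s) j ^ 2) / (∑ i, ∑ j, A i j ^ 2)) • (M t * M t)
      = (1 : Matrix (Fin n) (Fin n) ℝ) - ((3 * q : ℝ) / 4) • P
          + (((q : ℝ) ^ 2 - q) / 4) • (P * P)) ∧
    ((q : ℝ) = (∑ i, ∑ j, A i j ^ 2) / snorm ^ 2 →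
      ∀ v : Fin n → ℝ, (∃ y : Fin m → ℝ, v = Matrix.vecMul y A) →
        v ⬝ᵥ (∑ t : Fin q → Fin m,
            (∏ s, (∑ j, A (t s) j ^ 2) / (∑ i, ∑ j, A i j ^ 2)) • (M t * M t)).mulVec v
          ≤ (1 - 1 / (2 * (snorm * cinv) ^ 2)) * ∑ j, v j ^ 2) :=
  stmt12_general m n q A hA snorm hsn0 hsn1 cinv hcinv atil hatil M hM P hP
end

section
/- Kaczmarz with averaging convergence: with the iteration x_{k+1} = x_k + (1/2) Σ_{i∈T_k} (b̃_i − ⟨ã_i, x_k⟩) ã_i where T_k consists of q = ‖A‖_F²/‖A‖² i.i.d. row indices sampled proportionally to squared row norms, and A x_* = b with x_0 − x_* in the row space of A, one has E[‖x_{k+1} − x_*‖²] ≤ (1 − 1/(2κ²)) E[‖x_k − x_*‖²], where κ = ‖A‖‖A⁻¹‖. -/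
open Finset

lemma sum_pi_prod' {m q : ℕ} (f : Fin q → Fin m → ℝ) :
    ∑ t : Fin q → Fin m, ∏ s, f s (t s) = ∏ s, ∑ i, f s i := by
  rw [Finset.prod_univ_sum, Fintype.piFinset_univ]

lemma exp_one' {m : ℕ} (p : Fin m → ℝ) (hp : ∑ i, p i = 1) (q : ℕ) :
    ∑ t : Fin q → Fin m, ∏ s, p (t s) = 1 := by
  rw [sum_pi_prod' (fun _ i => p i)]
  simp [hp]

lemma exp_lin' {m : ℕ} (p y : Fin m → ℝ) (hp : ∑ i, p i = 1) (q : ℕ) :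
    ∑ t : Fin q → Fin m, (∏ s, p (t s)) * (∑ s, y (t s))
      = (q : ℝ) * ∑ i, p i * y i := by
  have h1 : ∀ t : Fin q → Fin m, (∏ s, p (t s)) * (∑ s, y (t s))
      = ∑ s₀, ∏ s, (p (t s) * if s = s₀ then y (t s) else 1) := by
    intro t
    rw [Finset.mul_sum]
    refine Finset.sum_congr rfl fun s₀ _ => ?_
    rw [Finset.prod_mul_distrib, Finset.prod_ite_eq' Finset.univ s₀ (fun s => y (t s))]
    simp
  simp_rw [h1]
  rw [Finset.sum_comm]
  have h2 : ∀ s₀ : Fin q, ∑ t : Fin q → Fin m, ∏ s, (p (t s) * if s = s₀ then y (t s) else 1)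
      = ∑ i, p i * y i := by
    intro s₀
    rw [sum_pi_prod' (fun s i => p i * if s = s₀ then y i else 1)]
    have : ∀ s : Fin q, (∑ i, (p i * if s = s₀ then y i else 1))
        = if s = s₀ then (∑ i, p i * y i) else 1 := by
      intro s
      by_cases h : s = s₀ <;> simp [h, hp]
    simp_rw [this]
    rw [Finset.prod_ite_eq' Finset.univ s₀ (fun _ => ∑ i, p i * y i)]
    simp
  simp_rw [h2]
  simp [mul_comm]

lemma exp_sq' {m : ℕ} (p y : Fin m → ℝ) (hp : ∑ i, p i = 1) (q : ℕ) :
    ∑ t : Fin q → Fin m, (∏ s, p (t s)) * (∑ s, y (t s)) ^ 2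
      = (q : ℝ) * (∑ i, p i * y i ^ 2)
        + (q : ℝ) * ((q : ℝ) - 1) * (∑ i, p i * y i) ^ 2 := by
  have h1 : ∀ t : Fin q → Fin m, (∏ s, p (t s)) * (∑ s, y (t s)) ^ 2
      = ∑ s₀, ∑ s₁, ∏ s,
          (p (t s) * ((if s = s₀ then y (t s) else 1) * (if s = s₁ then y (t s) else 1))) := by
    intro t
    have hexp : (∑ s, y (t s)) ^ 2 = ∑ s₀, ∑ s₁, y (t s₀) * y (t s₁) := by
      rw [sq, Finset.mul_sum]
      simp_rw [Finset.sum_mul]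
      rw [Finset.sum_comm]
    rw [hexp, Finset.mul_sum]
    refine Finset.sum_congr rfl fun s₀ _ => ?_
    rw [Finset.mul_sum]
    refine Finset.sum_congr rfl fun s₁ _ => ?_
    rw [Finset.prod_mul_distrib, Finset.prod_mul_distrib,
      Finset.prod_ite_eq' Finset.univ s₀ (fun s => y (t s)),
      Finset.prod_ite_eq' Finset.univ s₁ (fun s => y (t s))]
    simp
  simp_rw [h1]
  rw [Finset.sum_comm]
  have h2 : ∀ s₀ s₁ : Fin q,
      (∑ t : Fin q → Fin m, ∏ s,
        (p (t s) * ((if s = s₀ then y (t s) else 1) * (if s = s₁ then y (t s) else 1))))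
      = if s₀ = s₁ then (∑ i, p i * y i ^ 2) else (∑ i, p i * y i) ^ 2 := by
    intro s₀ s₁
    rw [sum_pi_prod' (fun s i => p i * ((if s = s₀ then y i else 1) * (if s = s₁ then y i else 1)))]
    by_cases h : s₀ = s₁
    · subst h
      have : ∀ s : Fin q, (∑ i, p i * ((if s = s₀ then y i else 1) * (if s = s₀ then y i else 1)))
          = if s = s₀ then (∑ i, p i * y i ^ 2) else 1 := by
        intro s; by_cases hs : s = s₀ <;> simp [hs, hp, sq]
      simp_rw [this]
      rw [Finset.prod_ite_eq' Finset.univ s₀ (fun _ => ∑ i, p i * y i ^ 2)]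
      simp
    · have : ∀ s : Fin q, (∑ i, p i * ((if s = s₀ then y i else 1) * (if s = s₁ then y i else 1)))
          = (if s = s₀ then (∑ i, p i * y i) else 1) * (if s = s₁ then (∑ i, p i * y i) else 1) := by
        intro s
        by_cases h0 : s = s₀ <;> by_cases h1' : s = s₁ <;>
          simp_all [hp]
      simp_rw [this]
      rw [Finset.prod_mul_distrib,
        Finset.prod_ite_eq' Finset.univ s₀ (fun _ => ∑ i, p i * y i),
        Finset.prod_ite_eq' Finset.univ s₁ (fun _ => ∑ i, p i * y i)]
      simp [h, sq]
  have h3 : ∀ s₀ : Fin q, (∑ t : Fin q → Fin m, ∑ s₁, ∏ s,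
        (p (t s) * ((if s = s₀ then y (t s) else 1) * (if s = s₁ then y (t s) else 1))))
      = (∑ i, p i * y i ^ 2) + ((q : ℝ) - 1) * (∑ i, p i * y i) ^ 2 := by
    intro s₀
    rw [Finset.sum_comm]
    have := fun s₁ => h2 s₀ s₁
    simp_rw [this]
    have expand : ∀ s₁ : Fin q,
        (if s₀ = s₁ then (∑ i, p i * y i ^ 2) else (∑ i, p i * y i) ^ 2)
        = (∑ i, p i * y i) ^ 2
          + (if s₀ = s₁ then (∑ i, p i * y i ^ 2) - (∑ i, p i * y i) ^ 2 else 0) := by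
      intro s₁; by_cases h : s₀ = s₁ <;> simp [h]
    simp_rw [expand]
    rw [Finset.sum_add_distrib, Finset.sum_const, Finset.sum_ite_eq]
    simp [Finset.card_univ]
    ring
  simp_rw [h3]
  rw [Finset.sum_const]
  simp [Finset.card_univ]
  ring

lemma final_ineq' (Q S C E2 G WW : ℝ) (hQ : 1 ≤ Q) (hS : 0 < S) (hC : 0 < C)
    (hG : 0 ≤ G) (hWW : 0 ≤ WW) (hW : WW ≤ S * G) (hE : E2 ≤ C * G) :
    E2 - Q * (G / (Q * S)) + (1/4) * (Q * (G / (Q * S)) + Q * (Q - 1) * (WW / (Q * S) ^ 2))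
      ≤ (1 - 1 / (2 * (S * C))) * E2 := by
  have hQ0 : 0 < Q := lt_of_lt_of_le one_pos hQ
  have key1 : Q * (G / (Q * S)) = G / S := by field_simp
  have h4 : Q * (Q - 1) * (WW / (Q * S) ^ 2) ≤ (Q - 1) * G / (Q * S) := by
    have e : (Q - 1) * G / (Q * S) = Q * (Q - 1) * ((S * G) / (Q * S) ^ 2) := by
      field_simp
    rw [e]
    have hd : WW / (Q * S) ^ 2 ≤ (S * G) / (Q * S) ^ 2 := by gcongr
    exact mul_le_mul_of_nonneg_left hd (by nlinarith)
  calc E2 - Q * (G / (Q * S)) + (1/4) * (Q * (G / (Q * S)) + Q * (Q - 1) * (WW / (Q * S) ^ 2))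
      = E2 - (G / S) + (1/4) * ((G / S) + Q * (Q - 1) * (WW / (Q * S) ^ 2)) := by rw [key1]
    _ ≤ E2 - (G / S) + (1/4) * ((G / S) + (Q - 1) * G / (Q * S)) := by linarith
    _ = E2 - G / (2 * S) - G / (4 * (Q * S)) := by field_simp; ring
    _ ≤ E2 - E2 / (2 * (S * C)) := by
        have t1 : 0 ≤ G / (4 * (Q * S)) := by positivity
        have t2 : E2 / (2 * (S * C)) ≤ G / (2 * S) := by
          rw [div_le_div_iff₀ (by positivity) (by positivity)]
          nlinarith
        linarith
    _ = (1 - 1 / (2 * (S * C))) * E2 := by ring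

/-- Kaczmarz with averaging.  With the iteration
`x' t = x + (1/2) ∑_{s<q} (b̃_{t s} − ⟨ã_{t s}, x⟩) ã_{t s}`, where the multiset
`t : Fin q → Fin m` consists of `q = ‖A‖_F²/‖A‖²` i.i.d. row indices sampled with
probability `‖A_{i*}‖²/‖A‖_F²`, `ã_i = A_{i*}/‖A_{i*}‖`, `b̃_i = b_i/‖A_{i*}‖`,
`A x_* = b` and `x − x_*` in the row space of `A`, one has
`E[‖x' − x_*‖²] ≤ (1 − 1/(2κ²)) ‖x − x_*‖²` where `κ = ‖A‖ ‖A⁻¹‖`.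
Here `snorm` is the spectral norm `‖A‖` and `cinv` stands for `‖A⁻¹‖`. -/
theorem stmt13 (m n q : ℕ) (hq0 : 0 < q)
    (A : Matrix (Fin m) (Fin n) ℝ) (hA : A ≠ 0)
    (hrow : ∀ i, (∑ j, A i j ^ 2) ≠ 0)
    (snorm : ℝ) (hsn0 : 0 < snorm)
    (hsn1 : ∀ v : Fin n → ℝ, (∑ i, (A.mulVec v i) ^ 2) ≤ snorm ^ 2 * ∑ j, v j ^ 2)
    (hsn2 : ∃ v : Fin n → ℝ, v ≠ 0 ∧
      (∑ i, (A.mulVec v i) ^ 2) = snorm ^ 2 * ∑ j, v j ^ 2)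
    (cinv : ℝ) (hcinv0 : 0 < cinv)
    (hcinv : ∀ w : Fin n → ℝ, (∃ y : Fin m → ℝ, w = Matrix.vecMul y A) →
      (∑ j, w j ^ 2) ≤ cinv ^ 2 * ∑ i, (A.mulVec w i) ^ 2)
    (hq : (q : ℝ) = (∑ i, ∑ j, A i j ^ 2) / snorm ^ 2)
    (b : Fin m → ℝ) (xstar x : Fin n → ℝ) (hb : A.mulVec xstar = b)
    (hx : ∃ y : Fin m → ℝ, (fun j => x j - xstar j) = Matrix.vecMul y A)
    (x' : (Fin q → Fin m) → Fin n → ℝ)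
    (hx' : ∀ t, x' t = fun j => x j + (1 / 2 : ℝ) * ∑ s,
      (b (t s) / Real.sqrt (∑ l, A (t s) l ^ 2)
        - ∑ l, A (t s) l / Real.sqrt (∑ l', A (t s) l' ^ 2) * x l)
        * (A (t s) j / Real.sqrt (∑ l, A (t s) l ^ 2))) :
    ∑ t : Fin q → Fin m, (∏ s, (∑ j, A (t s) j ^ 2) / (∑ i, ∑ j, A i j ^ 2)) *
        (∑ j, (x' t j - xstar j) ^ 2)
      ≤ (1 - 1 / (2 * (snorm * cinv) ^ 2)) * ∑ j, (x j - xstar j) ^ 2 := by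
  classical
  set F : ℝ := ∑ i, ∑ j, A i j ^ 2 with hFdef
  have hr_pos : ∀ i, 0 < ∑ j, A i j ^ 2 := fun i =>
    lt_of_le_of_ne (Finset.sum_nonneg fun j _ => sq_nonneg _) (Ne.symm (hrow i))
  have hqF : F = (q : ℝ) * snorm ^ 2 := by
    rw [hq]; field_simp
  have hq1 : (1 : ℝ) ≤ (q : ℝ) := by exact_mod_cast hq0
  have hF_pos : 0 < F := by
    rw [hqF]; positivity
  set p : Fin m → ℝ := fun i => (∑ j, A i j ^ 2) / F with hpdef
  have hp : ∑ i, p i = 1 := by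
    rw [hpdef, ← Finset.sum_div]
    exact div_self hF_pos.ne'
  set c : Fin m → ℝ := fun i => (∑ l, A i l * (x l - xstar l)) / Real.sqrt (∑ l, A i l ^ 2)
    with hcdef
  -- per-sample error identity
  have key : ∀ t : Fin q → Fin m, ∑ j, (x' t j - xstar j) ^ 2
      = (∑ j, (x j - xstar j) ^ 2) - (∑ s, c (t s) ^ 2)
        + (1/4) * ∑ j, (∑ s, c (t s) * (A (t s) j / Real.sqrt (∑ l, A (t s) l ^ 2))) ^ 2 := by
    have hb' : ∀ i, b i = ∑ l, A i l * xstar l := by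
      intro i; rw [← hb]; simp [Matrix.mulVec, dotProduct]
    have hcoef : ∀ i : Fin m,
        b i / Real.sqrt (∑ l, A i l ^ 2)
          - (∑ l, A i l / Real.sqrt (∑ l', A i l' ^ 2) * x l) = - c i := by
      intro i
      rw [hb' i, hcdef]
      have h1 : ∑ l, A i l / Real.sqrt (∑ l', A i l' ^ 2) * x l
          = (∑ l, A i l * x l) / Real.sqrt (∑ l', A i l' ^ 2) := by
        simp_rw [div_mul_eq_mul_div]
        rw [← Finset.sum_div]
      rw [h1, div_sub_div_same, ← neg_div]
      congr 1
      rw [← Finset.sum_sub_distrib, ← Finset.sum_neg_distrib]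
      exact Finset.sum_congr rfl fun l _ => by ring
    have hsum : ∀ i : Fin m,
        ∑ j, (x j - xstar j) * (A i j / Real.sqrt (∑ l, A i l ^ 2)) = c i := by
      intro i
      rw [hcdef]
      simp_rw [← mul_div_assoc]
      rw [← Finset.sum_div]
      congr 1
      exact Finset.sum_congr rfl fun l _ => by ring
    intro t
    have hform : ∀ j, x' t j - xstar j
        = (x j - xstar j)
          - (1/2) * ∑ s, c (t s) * (A (t s) j / Real.sqrt (∑ l, A (t s) l ^ 2)) := by
      intro j
      rw [hx' t]
      simp only
      have h2 : ∀ s : Fin q,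
          (b (t s) / Real.sqrt (∑ l, A (t s) l ^ 2)
            - ∑ l, A (t s) l / Real.sqrt (∑ l', A (t s) l' ^ 2) * x l)
            * (A (t s) j / Real.sqrt (∑ l, A (t s) l ^ 2))
          = -(c (t s) * (A (t s) j / Real.sqrt (∑ l, A (t s) l ^ 2))) := by
        intro s; rw [hcoef (t s)]; ring
      simp_rw [h2]
      rw [Finset.sum_neg_distrib]
      ring
    simp_rw [hform]
    have expand : ∀ a bb : ℝ, (a - (1/2) * bb) ^ 2 = a ^ 2 - a * bb + (1/4) * bb ^ 2 :=
      fun a bb => by ring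
    simp_rw [expand]
    rw [Finset.sum_add_distrib, Finset.sum_sub_distrib, ← Finset.mul_sum]
    congr 1
    congr 1
    have cross : ∑ j, (x j - xstar j)
        * (∑ s, c (t s) * (A (t s) j / Real.sqrt (∑ l, A (t s) l ^ 2))) = ∑ s, c (t s) ^ 2 := by
      simp_rw [Finset.mul_sum]
      rw [Finset.sum_comm]
      refine Finset.sum_congr rfl fun s _ => ?_
      have h3 : ∀ j, (x j - xstar j) * (c (t s) * (A (t s) j / Real.sqrt (∑ l, A (t s) l ^ 2)))
          = c (t s) * ((x j - xstar j) * (A (t s) j / Real.sqrt (∑ l, A (t s) l ^ 2))) :=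
        fun j => by ring
      rw [Finset.sum_congr rfl fun j _ => h3 j, ← Finset.mul_sum, hsum (t s), sq]
    rw [cross]
  set g : Fin m → ℝ := fun i => ∑ l, A i l * (x l - xstar l) with hgdef
  set G : ℝ := ∑ i, g i ^ 2 with hGdef
  set W : Fin n → ℝ := fun j => ∑ i, g i * A i j with hWdef
  set WW : ℝ := ∑ j, W j ^ 2 with hWWdef
  -- algebraic identities
  have h1 : ∑ i, p i * c i ^ 2 = G / F := by
    rw [hGdef, Finset.sum_div]
    refine Finset.sum_congr rfl fun i _ => ?_
    rw [hpdef, hcdef, hgdef]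
    simp only
    rw [div_pow, Real.sq_sqrt (hr_pos i).le]
    rw [div_mul_div_comm]
    rw [div_eq_div_iff (mul_ne_zero hF_pos.ne' (hrow i)) hF_pos.ne']
    ring
  have h2 : ∑ j, ∑ i, p i * (c i * (A i j / Real.sqrt (∑ l, A i l ^ 2))) ^ 2 = G / F := by
    rw [← h1, Finset.sum_comm]
    refine Finset.sum_congr rfl fun i _ => ?_
    have hone : ∑ j, (A i j / Real.sqrt (∑ l, A i l ^ 2)) ^ 2 = 1 := by
      simp_rw [div_pow, Real.sq_sqrt (hr_pos i).le]
      rw [← Finset.sum_div]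
      exact div_self (hrow i)
    calc ∑ j, p i * (c i * (A i j / Real.sqrt (∑ l, A i l ^ 2))) ^ 2
        = (p i * c i ^ 2) * ∑ j, (A i j / Real.sqrt (∑ l, A i l ^ 2)) ^ 2 := by
          rw [Finset.mul_sum]
          exact Finset.sum_congr rfl fun j _ => by ring
      _ = p i * c i ^ 2 := by rw [hone, mul_one]
  have h3 : ∀ j, ∑ i, p i * (c i * (A i j / Real.sqrt (∑ l, A i l ^ 2))) = W j / F := by
    intro j
    rw [hWdef]
    simp only
    rw [Finset.sum_div]
    refine Finset.sum_congr rfl fun i _ => ?_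
    rw [hpdef, hcdef, hgdef]
    simp only
    have hss : Real.sqrt (∑ l, A i l ^ 2) * Real.sqrt (∑ l, A i l ^ 2) = ∑ l, A i l ^ 2 :=
      Real.mul_self_sqrt (hr_pos i).le
    rw [div_mul_div_comm, hss, div_mul_div_comm]
    rw [div_eq_div_iff (mul_ne_zero hF_pos.ne' (hrow i)) hF_pos.ne']
    ring
  -- expectation computation
  have main_eq : ∑ t : Fin q → Fin m, (∏ s, p (t s)) * (∑ j, (x' t j - xstar j) ^ 2)
      = (∑ j, (x j - xstar j) ^ 2) - (q : ℝ) * (G / F)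
        + (1/4) * ((q : ℝ) * (G / F) + (q : ℝ) * ((q : ℝ) - 1) * (WW / F ^ 2)) := by
    have split : ∀ t : Fin q → Fin m,
        (∏ s, p (t s)) * (∑ j, (x' t j - xstar j) ^ 2)
        = (∏ s, p (t s)) * (∑ j, (x j - xstar j) ^ 2)
          - (∏ s, p (t s)) * (∑ s, c (t s) ^ 2)
          + (∏ s, p (t s)) *
            ((1/4) * ∑ j, (∑ s, c (t s) * (A (t s) j / Real.sqrt (∑ l, A (t s) l ^ 2))) ^ 2) := by
      intro t; rw [key t]; ring
    rw [Finset.sum_congr rfl fun t _ => split t,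
      Finset.sum_add_distrib, Finset.sum_sub_distrib]
    have tA : ∑ t : Fin q → Fin m, (∏ s, p (t s)) * (∑ j, (x j - xstar j) ^ 2)
        = ∑ j, (x j - xstar j) ^ 2 := by
      rw [← Finset.sum_mul, exp_one' p hp q, one_mul]
    have tB : ∑ t : Fin q → Fin m, (∏ s, p (t s)) * (∑ s, c (t s) ^ 2)
        = (q : ℝ) * (G / F) := by
      rw [exp_lin' p (fun i => c i ^ 2) hp q, h1]
    have tC : ∑ t : Fin q → Fin m, (∏ s, p (t s)) *
          ((1/4) * ∑ j, (∑ s, c (t s) * (A (t s) j / Real.sqrt (∑ l, A (t s) l ^ 2))) ^ 2)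
        = (1/4) * ((q : ℝ) * (G / F) + (q : ℝ) * ((q : ℝ) - 1) * (WW / F ^ 2)) := by
      have step : ∀ t : Fin q → Fin m, (∏ s, p (t s)) *
            ((1/4) * ∑ j, (∑ s, c (t s) * (A (t s) j / Real.sqrt (∑ l, A (t s) l ^ 2))) ^ 2)
          = (1/4) * ∑ j, (∏ s, p (t s)) *
              (∑ s, c (t s) * (A (t s) j / Real.sqrt (∑ l, A (t s) l ^ 2))) ^ 2 := by
        intro t
        rw [Finset.mul_sum]
        rw [Finset.mul_sum]
        rw [Finset.mul_sum]
        refine Finset.sum_congr rfl fun j _ => by ring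
      simp_rw [step]
      rw [← Finset.mul_sum, Finset.sum_comm]
      congr 1
      have perj : ∀ j, ∑ t : Fin q → Fin m, (∏ s, p (t s)) *
            (∑ s, c (t s) * (A (t s) j / Real.sqrt (∑ l, A (t s) l ^ 2))) ^ 2
          = (q : ℝ) * (∑ i, p i * (c i * (A i j / Real.sqrt (∑ l, A i l ^ 2))) ^ 2)
            + (q : ℝ) * ((q : ℝ) - 1)
              * (∑ i, p i * (c i * (A i j / Real.sqrt (∑ l, A i l ^ 2)))) ^ 2 := by
        intro j
        exact exp_sq' p (fun i => c i * (A i j / Real.sqrt (∑ l, A i l ^ 2))) hp q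
      simp_rw [perj, h3]
      rw [Finset.sum_add_distrib, ← Finset.mul_sum, h2, ← Finset.mul_sum]
      congr 2
      rw [hWWdef]
      simp_rw [div_pow]
      rw [← Finset.sum_div]
    rw [tA, tB, tC]
  -- spectral bound on W
  have hW : WW ≤ snorm ^ 2 * G := by
    have hWvec : W = Matrix.vecMul g A := by
      funext j; simp [hWdef, Matrix.vecMul, dotProduct]
    have step1 : ∑ j, W j ^ 2 = ∑ i, g i * (A.mulVec W) i := by
      have hsq : ∀ j, W j ^ 2 = (∑ i, g i * A i j) * W j := by
        intro j; rw [sq]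
      simp_rw [hsq, Finset.sum_mul]
      rw [Finset.sum_comm]
      refine Finset.sum_congr rfl fun i _ => ?_
      simp_rw [Matrix.mulVec, dotProduct, Finset.mul_sum]
      exact Finset.sum_congr rfl fun j _ => by ring
    have cs : (∑ i, g i * (A.mulVec W) i) ^ 2 ≤ (∑ i, g i ^ 2) * ∑ i, (A.mulVec W) i ^ 2 :=
      Finset.sum_mul_sq_le_sq_mul_sq _ _ _
    have hbnd := hsn1 W
    have hWW0' : (0:ℝ) ≤ ∑ j, W j ^ 2 := Finset.sum_nonneg fun j _ => sq_nonneg _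
    have hG0' : (0:ℝ) ≤ ∑ i, g i ^ 2 := Finset.sum_nonneg fun i _ => sq_nonneg _
    rw [hWWdef, hGdef]
    rcases hWW0'.eq_or_lt with h | h
    · rw [← h]
      positivity
    · have keyW : (∑ j, W j ^ 2) ^ 2 ≤ (snorm ^ 2 * ∑ i, g i ^ 2) * ∑ j, W j ^ 2 := by
        calc (∑ j, W j ^ 2) ^ 2 = (∑ i, g i * (A.mulVec W) i) ^ 2 := by rw [step1]
          _ ≤ (∑ i, g i ^ 2) * ∑ i, (A.mulVec W) i ^ 2 := cs
          _ ≤ (∑ i, g i ^ 2) * (snorm ^ 2 * ∑ j, W j ^ 2) := mul_le_mul_of_nonneg_left hbnd hG0'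
          _ = (snorm ^ 2 * ∑ i, g i ^ 2) * ∑ j, W j ^ 2 := by ring
      have keyW' : (∑ j, W j ^ 2) * (∑ j, W j ^ 2)
          ≤ (snorm ^ 2 * ∑ i, g i ^ 2) * ∑ j, W j ^ 2 := by nlinarith [keyW]
      exact le_of_mul_le_mul_right keyW' h
  -- conditioning bound
  have hE : (∑ j, (x j - xstar j) ^ 2) ≤ cinv ^ 2 * G := by
    have := hcinv (fun j => x j - xstar j) hx
    simpa [Matrix.mulVec, dotProduct, hgdef, hGdef] using this
  have hG0 : 0 ≤ G := Finset.sum_nonneg fun i _ => sq_nonneg _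
  have hWW0 : 0 ≤ WW := by
    rw [hWWdef]; exact Finset.sum_nonneg fun j _ => sq_nonneg _
  calc ∑ t : Fin q → Fin m, (∏ s, (∑ j, A (t s) j ^ 2) / F) * (∑ j, (x' t j - xstar j) ^ 2)
      = (∑ j, (x j - xstar j) ^ 2) - (q : ℝ) * (G / F)
        + (1/4) * ((q : ℝ) * (G / F) + (q : ℝ) * ((q : ℝ) - 1) * (WW / F ^ 2)) := main_eq
    _ ≤ (1 - 1 / (2 * (snorm * cinv) ^ 2)) * ∑ j, (x j - xstar j) ^ 2 := by
        have hfin := final_ineq' (q : ℝ) (snorm ^ 2) (cinv ^ 2) (∑ j, (x j - xstar j) ^ 2) G WW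
          hq1 (by positivity) (by positivity) hG0 hWW0 hW hE
        rw [hqF]
        rw [show (snorm * cinv) ^ 2 = snorm ^ 2 * cinv ^ 2 from by ring]
        exact hfin
end
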